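/- arXiv:math/0505490 — 7 statements merged into one kernel-verified Lean document; each statement's English description precedes it below -/
import Mathlib

section
/- Let 𝔨 be a finite-dimensional real Lie algebra equipped with a (positive definite) inner product ⟨·,·⟩ such that ad(X) is skew-symmetric for every X ∈ 𝔨, i.e. ⟨[X,Y],Z⟩ = −⟨Y,[X,Z]⟩ for all X, Y, Z ∈ 𝔨. Then every solvable Lie subalgebra of 𝔨 is abelian. -/
/-!
For an invariant form `Φ` with `Φ x x ≠ 0` for `x ≠ 0`, the orthogonal complement of the derived
algebra `[𝔰, 𝔰]` is central: if `z ⊥ [𝔰, 𝔰]` then `Φ [y, z] [y, z] = -Φ [y, [y, z]] z = 0`.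
It is also a linear complement of `[𝔰, 𝔰]`, so `𝔰 = [𝔰, 𝔰] ⊕ 𝔷` with `𝔷` central and hence
`[𝔰, 𝔰] = [[𝔰, 𝔰], [𝔰, 𝔰]]`. The derived series is therefore constant from its first term on,
and solvability forces `[𝔰, 𝔰] = 0`.
-/

open LieModule

namespace LieAlgebra

section CommRing

variable {R L : Type*} [CommRing R] [LieRing L] [LieAlgebra R L]

theorem derivedSeries_eq_bot_of_succ_eq [IsSolvable L] {k : ℕ}
    (h : derivedSeries R L (k + 1) = derivedSeries R L k) : derivedSeries R L k = ⊥ := by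
  have stable : ∀ n, derivedSeries R L (k + n) = derivedSeries R L k := by
    intro n
    induction n with
    | zero => rfl
    | succ n ih =>
      rw [← add_assoc, derivedSeries_def, derivedSeriesOfIdeal_succ, ← derivedSeries_def, ih,
        ← derivedSeriesOfIdeal_succ, ← derivedSeries_def, h]
  obtain ⟨n, hn⟩ := (isSolvable_iff R L).mp ‹_›
  rw [← stable n, eq_bot_iff, ← hn]
  exact derivedSeriesOfIdeal_le le_rfl (Nat.le_add_left n k)

theorem derivedSeries_two_eq_one_of_sup_eq_top {C : LieIdeal R L} (hC : C ≤ center R L)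
    (hsup : derivedSeries R L 1 ⊔ C = ⊤) : derivedSeries R L 2 = derivedSeries R L 1 := by
  have hC_lie : ∀ I : LieIdeal R L, ⁅I, C⁆ = ⊥ := fun I =>
    le_bot_iff.mp <| (LieSubmodule.mono_lie le_top hC).trans
      (ideal_oper_maxTrivSubmodule_eq_bot R L L ⊤).le
  rw [derivedSeries_def, derivedSeriesOfIdeal_succ, ← derivedSeries_def]
  conv_rhs => rw [derivedSeries_def, derivedSeriesOfIdeal_succ, derivedSeriesOfIdeal_zero, ← hsup]
  simp [LieSubmodule.lie_sup, LieSubmodule.sup_lie, LieSubmodule.lie_comm C, hC_lie]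

theorem isLieAbelian_of_derivedSeries_one_eq_bot (h : derivedSeries R L 1 = ⊥) :
    IsLieAbelian L :=
  (lie_abelian_iff_equiv_lie_abelian LieIdeal.topEquiv).mp
    ((abelian_iff_derived_one_eq_bot ⊤).mpr h)

lemma InvariantForm.orthogonal_derivedSeries_one_le_center {Φ : LinearMap.BilinForm R L}
    (hΦ_inv : Φ.lieInvariant L) (hΦ_aniso : Φ.toQuadraticMap.Anisotropic) :
    orthogonal Φ hΦ_inv (derivedSeries R L 1) ≤ center R L := by
  intro z hz y
  have hmem : ⁅y, ⁅y, z⁆⁆ ∈ derivedSeries R L 1 := by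
    rw [derivedSeries_def, derivedSeriesOfIdeal_succ]
    exact LieSubmodule.lie_mem_lie (LieSubmodule.mem_top _) (LieSubmodule.mem_top _)
  apply hΦ_aniso
  rw [LinearMap.BilinMap.toQuadraticMap_apply, ← neg_eq_zero, ← hΦ_inv]
  exact (InvariantForm.mem_orthogonal Φ hΦ_inv _ z).mp hz _ hmem

end CommRing

lemma InvariantForm.isCompl_orthogonal_of_anisotropic {𝕜 L M : Type*} [Field 𝕜] [LieRing L]
    [AddCommGroup M] [Module 𝕜 M] [LieRingModule L M] [FiniteDimensional 𝕜 M]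
    {Φ : LinearMap.BilinForm 𝕜 M} (hΦ_inv : Φ.lieInvariant L) (hΦ_refl : Φ.IsRefl)
    (hΦ_aniso : Φ.toQuadraticMap.Anisotropic) (N : LieSubmodule 𝕜 L M) :
    IsCompl N (orthogonal Φ hΦ_inv N) := by
  rw [← LieSubmodule.isCompl_toSubmodule, orthogonal_toSubmodule,
    LinearMap.BilinForm.isCompl_orthogonal_iff_disjoint hΦ_refl, Submodule.disjoint_def]
  exact fun x hxN hx_orth => hΦ_aniso x (hx_orth x hxN)

theorem isLieAbelian_of_isSolvable_of_anisotropic {𝕜 L : Type*} [Field 𝕜] [LieRing L]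
    [LieAlgebra 𝕜 L] [FiniteDimensional 𝕜 L] [IsSolvable L] {Φ : LinearMap.BilinForm 𝕜 L}
    (hΦ_inv : Φ.lieInvariant L) (hΦ_refl : Φ.IsRefl) (hΦ_aniso : Φ.toQuadraticMap.Anisotropic) :
    IsLieAbelian L := by
  have hsup := (InvariantForm.isCompl_orthogonal_of_anisotropic hΦ_inv hΦ_refl hΦ_aniso
    (derivedSeries 𝕜 L 1)).sup_eq_top
  have hcenter := InvariantForm.orthogonal_derivedSeries_one_le_center hΦ_inv hΦ_aniso
  exact isLieAbelian_of_derivedSeries_one_eq_bot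
    (derivedSeries_eq_bot_of_succ_eq (derivedSeries_two_eq_one_of_sup_eq_top hcenter hsup))

end LieAlgebra

/-- Every solvable Lie subalgebra of a finite-dimensional real Lie algebra carrying an
inner product (a positive definite symmetric bilinear form) for which every `ad X` is
skew-symmetric (i.e. a compact Lie algebra) is abelian. -/
theorem solvable_subalgebra_of_compact_isAbelian
    (K : Type*) [LieRing K] [LieAlgebra ℝ K] [FiniteDimensional ℝ K]
    (ip : K →ₗ[ℝ] K →ₗ[ℝ] ℝ)
    (hsymm : ∀ X Y : K, ip X Y = ip Y X)
    (hpos : ∀ X : K, X ≠ 0 → 0 < ip X X)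
    (hskew : ∀ X Y Z : K, ip ⁅X, Y⁆ Z = -ip Y ⁅X, Z⁆)
    (S : LieSubalgebra ℝ K) (hS : LieAlgebra.IsSolvable S) :
    IsLieAbelian S := by
  let Φ : LinearMap.BilinForm ℝ S := ip.compl₁₂ (S.incl : S →ₗ[ℝ] K) S.incl
  have hΦ_inv : Φ.lieInvariant S := fun x y z => hskew x y z
  have hΦ_refl : Φ.IsRefl := fun x y h => by simpa [Φ, hsymm] using h
  have hΦ_posDef : Φ.toQuadraticMap.PosDef := fun x hx => hpos x (by simpa using hx)
  exact LieAlgebra.isLieAbelian_of_isSolvable_of_anisotropic hΦ_inv hΦ_refl hΦ_posDef.anisotropic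
end

section
/- Let 𝔤 be a finite-dimensional real Lie algebra with a vector space direct sum decomposition 𝔤 = 𝔨 ⊕ 𝔞 ⊕ 𝔳 ⊕ 𝔷 in which 𝔨 is a Lie subalgebra, 𝔞 = ℝB is one-dimensional, and the bracket satisfies [𝔨,B] = 0, [𝔨,𝔳] ⊆ 𝔳, [𝔨,𝔷] ⊆ 𝔷, [B,V] = V for all V ∈ 𝔳, [B,Z] = 2Z for all Z ∈ 𝔷, [𝔳,𝔳] ⊆ 𝔷, [𝔳,𝔷] = 0 and [𝔷,𝔷] = 0. Write 𝔫 = 𝔳 ⊕ 𝔷, and fix an inner product on 𝔞 ⊕ 𝔫 in which 𝔞, 𝔳, 𝔷 are mutually orthogonal and for which ad(T)|𝔫 is skew-symmetric for every T ∈ 𝔨. Let π : 𝔤 → 𝔨 and τ : 𝔤 → 𝔞 ⊕ 𝔫 be the projections along the decomposition. Let 𝔰 ⊆ 𝔤 be a Lie subalgebra such that 𝔰_c := π(𝔰) is abelian and B ∈ 𝔰_n := τ(𝔰). Then the derived algebra satisfies [𝔰,𝔰] ⊆ 𝔫 and [𝔰,𝔰] = 𝔰_n ∩ 𝔫. -/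
/-- Let `𝔤 = 𝔨 ⊕ ℝB ⊕ 𝔳 ⊕ 𝔷` be a finite-dimensional real Lie algebra, where `𝔨` is a
subalgebra centralizing `B` and normalizing `𝔳` and `𝔷`, with `[B,V] = V`, `[B,Z] = 2Z`,
`[𝔳,𝔳] ⊆ 𝔷`, `[𝔳,𝔷] = 0`, `[𝔷,𝔷] = 0`; fix an inner product on `ℝB ⊕ 𝔫` (`𝔫 = 𝔳 ⊕ 𝔷`)
in which `ℝB`, `𝔳`, `𝔷` are mutually orthogonal and `ad T` is skew-symmetric on `𝔫`
for all `T ∈ 𝔨`.  If `𝔰` is a Lie subalgebra whose projection `𝔰_c = π 𝔰` to `𝔨` is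
abelian and whose projection `𝔰_n = τ 𝔰` to `ℝB ⊕ 𝔳 ⊕ 𝔷` contains `B`, then
`[𝔰,𝔰] ⊆ 𝔫` and `[𝔰,𝔰] = 𝔰_n ∩ 𝔫`. -/
theorem derived_le_n_and_derived_eq_sn_inter_n
    (g : Type*) [LieRing g] [LieAlgebra ℝ g] [FiniteDimensional ℝ g]
    (𝔨 : LieSubalgebra ℝ g) (B : g) (hB : B ≠ 0) (𝔳 𝔷 : Submodule ℝ g)
    -- vector space direct sum decomposition 𝔤 = 𝔨 ⊕ ℝB ⊕ 𝔳 ⊕ 𝔷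
    (hsum : 𝔨.toSubmodule ⊔ Submodule.span ℝ {B} ⊔ 𝔳 ⊔ 𝔷 = ⊤)
    (hindep : ∀ T ∈ 𝔨, ∀ t : ℝ, ∀ V ∈ 𝔳, ∀ Z ∈ 𝔷,
      T + t • B + V + Z = 0 → T = 0 ∧ t = 0 ∧ V = 0 ∧ Z = 0)
    -- bracket relations
    (hkB : ∀ T ∈ 𝔨, ⁅T, B⁆ = 0)
    (hkv : ∀ T ∈ 𝔨, ∀ V ∈ 𝔳, ⁅T, V⁆ ∈ 𝔳)
    (hkz : ∀ T ∈ 𝔨, ∀ Z ∈ 𝔷, ⁅T, Z⁆ ∈ 𝔷)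
    (hBv : ∀ V ∈ 𝔳, ⁅B, V⁆ = V)
    (hBz : ∀ Z ∈ 𝔷, ⁅B, Z⁆ = (2 : ℝ) • Z)
    (hvv : ∀ V ∈ 𝔳, ∀ W ∈ 𝔳, ⁅V, W⁆ ∈ 𝔷)
    (hvz : ∀ V ∈ 𝔳, ∀ Z ∈ 𝔷, ⁅V, Z⁆ = 0)
    (hzz : ∀ Z ∈ 𝔷, ∀ Z' ∈ 𝔷, ⁅Z, Z'⁆ = 0)
    -- an inner product on ℝB ⊕ 𝔳 ⊕ 𝔷: ℝB, 𝔳, 𝔷 mutually orthogonal,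
    -- and ad(T)|𝔫 skew-symmetric for every T ∈ 𝔨
    (ip : g →ₗ[ℝ] g →ₗ[ℝ] ℝ)
    (hip_symm : ∀ x y : g, ip x y = ip y x)
    (hip_pos : ∀ x ∈ Submodule.span ℝ {B} ⊔ 𝔳 ⊔ 𝔷, x ≠ 0 → 0 < ip x x)
    (horthBv : ∀ V ∈ 𝔳, ip B V = 0)
    (horthBz : ∀ Z ∈ 𝔷, ip B Z = 0)
    (horthvz : ∀ V ∈ 𝔳, ∀ Z ∈ 𝔷, ip V Z = 0)
    (hskew : ∀ T ∈ 𝔨, ∀ X ∈ 𝔳 ⊔ 𝔷, ∀ Y ∈ 𝔳 ⊔ 𝔷, ip ⁅T, X⁆ Y = -ip X ⁅T, Y⁆)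
    -- the projections π : 𝔤 → 𝔨 and τ : 𝔤 → ℝB ⊕ 𝔳 ⊕ 𝔷
    (π τ : g →ₗ[ℝ] g)
    (hπ : ∀ x : g, π x ∈ 𝔨.toSubmodule)
    (hτ : ∀ x : g, τ x ∈ Submodule.span ℝ {B} ⊔ 𝔳 ⊔ 𝔷)
    (hπτ : ∀ x : g, π x + τ x = x)
    -- the subalgebra 𝔰, with 𝔰_c = π(𝔰) abelian and B ∈ 𝔰_n = τ(𝔰)
    (𝔰 : LieSubalgebra ℝ g)
    (hsc : ∀ x ∈ Submodule.map π 𝔰.toSubmodule, ∀ y ∈ Submodule.map π 𝔰.toSubmodule,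
      ⁅x, y⁆ = 0)
    (hBsn : B ∈ Submodule.map τ 𝔰.toSubmodule) :
    Submodule.span ℝ {x : g | ∃ a ∈ 𝔰, ∃ b ∈ 𝔰, x = ⁅a, b⁆} ≤ 𝔳 ⊔ 𝔷 ∧
    Submodule.span ℝ {x : g | ∃ a ∈ 𝔰, ∃ b ∈ 𝔰, x = ⁅a, b⁆} =
      Submodule.map τ 𝔰.toSubmodule ⊓ (𝔳 ⊔ 𝔷) := by
  classical
  -- notation
  set Sp := Submodule.span ℝ {x : g | ∃ a ∈ 𝔰, ∃ b ∈ 𝔰, x = ⁅a, b⁆} with hSp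
  -- decomposition of τ x
  have hdecomp : ∀ x : g, ∃ t : ℝ, ∃ V ∈ 𝔳, ∃ Z ∈ 𝔷, τ x = t • B + V + Z := by
    intro x
    have h := hτ x
    rw [Submodule.mem_sup] at h
    obtain ⟨y, hy, z, hz, hyz⟩ := h
    rw [Submodule.mem_sup] at hy
    obtain ⟨w, hw, v, hv, hwv⟩ := hy
    rw [Submodule.mem_span_singleton] at hw
    obtain ⟨t, ht⟩ := hw
    exact ⟨t, v, hv, z, hz, by rw [ht, hwv, hyz]⟩
  -- key bracket computation
  have hkey : ∀ T ∈ 𝔨, ∀ T' ∈ 𝔨, ⁅T, T'⁆ = 0 → ∀ (t t' : ℝ), ∀ V ∈ 𝔳, ∀ V' ∈ 𝔳,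
      ∀ Z ∈ 𝔷, ∀ Z' ∈ 𝔷, ⁅T + (t • B + V + Z), T' + (t' • B + V' + Z')⁆ ∈ 𝔳 ⊔ 𝔷 := by
    intro T hT T' hT' hTT' t t' V hV V' hV' Z hZ Z' hZ'
    have h1 : ⁅T, B⁆ = 0 := hkB T hT
    have h2 : ⁅T', B⁆ = 0 := hkB T' hT'
    have h3 : ⁅B, T'⁆ = 0 := by rw [← lie_skew, h2, neg_zero]
    have h4 : ⁅B, V'⁆ = V' := hBv V' hV'
    have h5 : ⁅B, Z'⁆ = (2 : ℝ) • Z' := hBz Z' hZ'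
    have h6 : ⁅V, B⁆ = -V := by rw [← lie_skew, hBv V hV]
    have h7 : ⁅Z, B⁆ = -((2:ℝ) • Z) := by rw [← lie_skew, hBz Z hZ]
    have h8 : ⁅V, T'⁆ = -⁅T', V⁆ := by rw [← lie_skew]
    have h9 : ⁅Z, T'⁆ = -⁅T', Z⁆ := by rw [← lie_skew]
    have h10 : ⁅V, Z'⁆ = 0 := hvz V hV Z' hZ'
    have h11 : ⁅Z, V'⁆ = 0 := by rw [← lie_skew, hvz V' hV' Z hZ, neg_zero]
    have h12 : ⁅Z, Z'⁆ = 0 := hzz Z hZ Z' hZ'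
    have hexp : ⁅T + (t • B + V + Z), T' + (t' • B + V' + Z')⁆ =
        (⁅T, V'⁆ - ⁅T', V⁆ + t • V' - t' • V) +
        (⁅T, Z'⁆ - ⁅T', Z⁆ + t • ((2:ℝ) • Z') - t' • ((2:ℝ) • Z) + ⁅V, V'⁆) := by
      simp only [lie_add, add_lie, lie_smul, smul_lie, h1, h2, h3, h4, h5, h6, h7, h8,
        h9, h10, h11, h12, hTT', lie_self, smul_zero, smul_neg, add_zero, zero_add]
      module
    rw [hexp]
    refine Submodule.add_mem _ (Submodule.mem_sup_left ?_) (Submodule.mem_sup_right ?_)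
    · exact Submodule.sub_mem _ (Submodule.add_mem _
        (Submodule.sub_mem _ (hkv T hT V' hV') (hkv T' hT' V hV))
        (Submodule.smul_mem _ _ hV')) (Submodule.smul_mem _ _ hV)
    · exact Submodule.add_mem _ (Submodule.sub_mem _ (Submodule.add_mem _
        (Submodule.sub_mem _ (hkz T hT Z' hZ') (hkz T' hT' Z hZ))
        (Submodule.smul_mem _ _ (Submodule.smul_mem _ _ hZ')))
        (Submodule.smul_mem _ _ (Submodule.smul_mem _ _ hZ))) (hvv V hV V' hV')
  -- brackets of elements of 𝔰 lie in 𝔫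
  have hbr : ∀ a ∈ 𝔰, ∀ b ∈ 𝔰, ⁅a, b⁆ ∈ 𝔳 ⊔ 𝔷 := by
    intro a ha b hb
    obtain ⟨t, V, hV, Z, hZ, hτa⟩ := hdecomp a
    obtain ⟨t', V', hV', Z', hZ', hτb⟩ := hdecomp b
    have ha' : a = π a + (t • B + V + Z) := by rw [← hτa]; exact (hπτ a).symm
    have hb' : b = π b + (t' • B + V' + Z') := by rw [← hτb]; exact (hπτ b).symm
    have hTT' : ⁅π a, π b⁆ = 0 := hsc _ ⟨a, ha, rfl⟩ _ ⟨b, hb, rfl⟩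
    rw [ha', hb']
    exact hkey _ (hπ a) _ (hπ b) hTT' t t' V hV V' hV' Z hZ Z' hZ'
  -- τ fixes 𝔫
  have hτn : ∀ x ∈ 𝔳 ⊔ 𝔷, τ x = x := by
    intro x hx
    rw [Submodule.mem_sup] at hx
    obtain ⟨V, hV, Z, hZ, hVZ⟩ := hx
    obtain ⟨t, V', hV', Z', hZ', hτx⟩ := hdecomp x
    have h1 : π x + (t • B + V' + Z') = V + Z := by
      rw [← hτx, hVZ]; exact hπτ x
    have h0 : π x + t • B + (V' - V) + (Z' - Z) = 0 := by
      have : π x + t • B + (V' - V) + (Z' - Z) =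
          (π x + (t • B + V' + Z')) - (V + Z) := by abel
      rw [this, h1, sub_self]
    obtain ⟨-, ht0, hV0, hZ0⟩ := hindep _ (hπ x) t _ (Submodule.sub_mem 𝔳 hV' hV)
      _ (Submodule.sub_mem 𝔷 hZ' hZ) h0
    rw [hτx, ht0, sub_eq_zero.mp hV0, sub_eq_zero.mp hZ0, zero_smul, zero_add, hVZ]
  -- brackets lie in 𝔰_n ⊓ 𝔫, so the span does
  have hspan_le : Sp ≤ Submodule.map τ 𝔰.toSubmodule ⊓ (𝔳 ⊔ 𝔷) := by
    rw [hSp, Submodule.span_le]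
    rintro x ⟨a, ha, b, hb, rfl⟩
    exact ⟨⟨⁅a, b⁆, 𝔰.lie_mem ha hb, hτn _ (hbr a ha b hb)⟩, hbr a ha b hb⟩
  -- the distinguished element s₀ with τ s₀ = B
  obtain ⟨s₀, hs₀, hτs₀⟩ := hBsn
  have hs₀' : s₀ = π s₀ + B := by rw [← hτs₀]; exact (hπτ s₀).symm
  -- ⁅s₀, π s⁆ = 0 for s ∈ 𝔰
  have hs₀π : ∀ s ∈ 𝔰, ⁅s₀, π s⁆ = 0 := by
    intro s hs
    have h1 : ⁅π s₀, π s⁆ = 0 := hsc _ ⟨s₀, hs₀, rfl⟩ _ ⟨s, hs, rfl⟩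
    have h2 : ⁅B, π s⁆ = 0 := by rw [← lie_skew, hkB _ (hπ s), neg_zero]
    rw [hs₀', add_lie, h1, h2, add_zero]
  -- ad s₀ maps S into the span
  have hDS : ∀ x ∈ Submodule.map τ 𝔰.toSubmodule ⊓ (𝔳 ⊔ 𝔷), ⁅s₀, x⁆ ∈ Sp := by
    rintro x ⟨⟨s, hs, hτs⟩, hxn⟩
    have hs' : s = π s + x := by rw [← hτs]; exact (hπτ s).symm
    have : ⁅s₀, x⁆ = ⁅s₀, s⁆ := by rw [hs', lie_add, hs₀π s hs, zero_add]
    rw [this, hSp]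
    exact Submodule.subset_span ⟨s₀, hs₀, s, hs, rfl⟩
  -- injectivity of ad s₀ on 𝔫
  have hDinj : ∀ x ∈ 𝔳 ⊔ 𝔷, ⁅s₀, x⁆ = 0 → x = 0 := by
    intro x hx h0
    by_contra hxne
    rw [Submodule.mem_sup] at hx
    obtain ⟨V, hV, Z, hZ, hVZ⟩ := hx
    have hxn : x ∈ 𝔳 ⊔ 𝔷 := by
      rw [Submodule.mem_sup]; exact ⟨V, hV, Z, hZ, hVZ⟩
    have hBx : ⁅B, x⁆ = V + (2:ℝ) • Z := by
      rw [← hVZ, lie_add, hBv V hV, hBz Z hZ]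
    have hxd : ⁅s₀, x⁆ = ⁅π s₀, x⁆ + (V + (2:ℝ) • Z) := by
      conv_lhs => rw [hs₀']
      rw [add_lie, hBx]
    -- skew part vanishes
    have hc : ip ⁅π s₀, x⁆ x = 0 := by
      have h1 := hskew _ (hπ s₀) x hxn x hxn
      rw [hip_symm x ⁅π s₀, x⁆] at h1
      linarith
    -- compute the inner product
    have hVv : ip V Z = 0 := horthvz V hV Z hZ
    have hZv : ip Z V = 0 := by rw [hip_symm]; exact hVv
    have hval : ip ⁅s₀, x⁆ x = ip V V + 2 * ip Z Z := by
      have e1 : ip ⁅s₀, x⁆ x = ip ⁅π s₀, x⁆ x + (ip V x + 2 * ip Z x) := by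
        rw [hxd]
        simp only [map_add, map_smul, LinearMap.add_apply, LinearMap.smul_apply,
          smul_eq_mul]
      have e2 : ip V x = ip V V := by
        rw [← hVZ, map_add, hVv, add_zero]
      have e3 : ip Z x = ip Z Z := by
        rw [← hVZ, map_add, hZv, zero_add]
      rw [e1, e2, e3, hc, zero_add]
    -- positivity
    have hVmem : V ∈ Submodule.span ℝ {B} ⊔ 𝔳 ⊔ 𝔷 :=
      Submodule.mem_sup_left (Submodule.mem_sup_right hV)
    have hZmem : Z ∈ Submodule.span ℝ {B} ⊔ 𝔳 ⊔ 𝔷 := Submodule.mem_sup_right hZ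
    have hVnn : 0 ≤ ip V V := by
      rcases eq_or_ne V 0 with h | h
      · simp [h]
      · exact le_of_lt (hip_pos V hVmem h)
    have hZnn : 0 ≤ ip Z Z := by
      rcases eq_or_ne Z 0 with h | h
      · simp [h]
      · exact le_of_lt (hip_pos Z hZmem h)
    have hpos : 0 < ip V V + 2 * ip Z Z := by
      rcases eq_or_ne V 0 with hV0 | hV0
      · rcases eq_or_ne Z 0 with hZ0 | hZ0
        · exfalso; apply hxne; rw [← hVZ, hV0, hZ0, add_zero]
        · have := hip_pos Z hZmem hZ0; linarith
      · have := hip_pos V hVmem hV0; linarith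
    rw [h0] at hval
    simp only [map_zero, LinearMap.zero_apply] at hval
    linarith [hval ▸ hpos]
  -- the endomorphism of S := 𝔰_n ⊓ 𝔫 given by ad s₀
  set S := Submodule.map τ 𝔰.toSubmodule ⊓ (𝔳 ⊔ 𝔷) with hSdef
  have hmapS : ∀ x ∈ S, (LieAlgebra.ad ℝ g s₀) x ∈ S := by
    intro x hx
    simp only [LieAlgebra.ad_apply]
    exact hspan_le (hDS x hx)
  let f : S →ₗ[ℝ] S := (LieAlgebra.ad ℝ g s₀).restrict hmapS
  have hfinj : Function.Injective f := by
    intro a b hab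
    have h1 : ⁅s₀, (a : g)⁆ = ⁅s₀, (b : g)⁆ := congrArg Subtype.val hab
    have h2 : ⁅s₀, (a : g) - (b : g)⁆ = 0 := by rw [lie_sub, h1, sub_self]
    have h3 : (a : g) - (b : g) ∈ 𝔳 ⊔ 𝔷 :=
      Submodule.sub_mem _ a.2.2 b.2.2
    exact Subtype.ext (sub_eq_zero.mp (hDinj _ h3 h2))
  have hfsurj : Function.Surjective f := (LinearMap.injective_iff_surjective).mp hfinj
  have hSle : S ≤ Sp := by
    intro x hx
    obtain ⟨y, hy⟩ := hfsurj ⟨x, hx⟩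
    have h1 : ⁅s₀, (y : g)⁆ = x := congrArg Subtype.val hy
    rw [← h1]
    exact hDS _ y.2
  exact ⟨hspan_le.trans inf_le_right, le_antisymm hspan_le hSle⟩
end

section
/- Let 𝔤 be a finite-dimensional real Lie algebra with a vector space direct sum decomposition 𝔤 = 𝔨 ⊕ 𝔞 ⊕ 𝔳 ⊕ 𝔷 in which 𝔨 is a Lie subalgebra, 𝔞 = ℝB is one-dimensional, and the bracket satisfies [𝔨,B] = 0, [𝔨,𝔳] ⊆ 𝔳, [𝔨,𝔷] ⊆ 𝔷, [B,V] = V for all V ∈ 𝔳, [B,Z] = 2Z for all Z ∈ 𝔷, [𝔳,𝔳] ⊆ 𝔷, [𝔳,𝔷] = 0 and [𝔷,𝔷] = 0. Write 𝔫 = 𝔳 ⊕ 𝔷, fix an inner product on 𝔞 ⊕ 𝔫 in which 𝔞, 𝔳, 𝔷 are mutually orthogonal and for which ad(T)|𝔫 is skew-symmetric for every T ∈ 𝔨, and let π : 𝔤 → 𝔨 and τ : 𝔤 → 𝔞 ⊕ 𝔫 be the projections. Let 𝔰 ⊆ 𝔤 be a Lie subalgebra with 𝔰_c := π(𝔰)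 abelian and B ∈ 𝔰_n := τ(𝔰), and let B̃ ∈ 𝔰_c be any element with B̃ + B ∈ 𝔰. Then [B̃, 𝔰_n] ⊆ 𝔰_n, i.e. 𝔰_n is normalized by B̃. -/
/-!
On `ℝB ⊕ 𝔳 ⊕ 𝔷` with the given inner product, `ad B` is self-adjoint (it acts by `0, 1, 2` on
the three orthogonal summands) and `ad B̃` is skew-adjoint (`B̃ ∈ 𝔨` kills `B` and acts
skew-symmetrically on `𝔳 ⊕ 𝔷`), and they commute because `[B̃, B] = 0`. So `D = ad (B̃ + B)` is a
normal operator there, with adjoint `ad B - ad B̃`. Since `π 𝔰` is abelian and commutes with `B`,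
`D` maps `𝔰_n = τ 𝔰` into itself; an invariant subspace of a normal operator is invariant under
its adjoint, hence under `ad B̃ = (D - D*) / 2`.
-/

open Module.End LinearMap
open scoped ComplexOrder

namespace LinearMap

variable {𝕜 E : Type*} [RCLike 𝕜] [NormedAddCommGroup E] [InnerProductSpace 𝕜 E]
  [FiniteDimensional 𝕜 E]

theorem trace_adjoint_mul_self_eq_zero_iff {A : E →ₗ[𝕜] E} :
    trace 𝕜 E (adjoint A * A) = 0 ↔ A = 0 := by
  let b := stdOrthonormalBasis 𝕜 E
  rw [trace_eq_matrix_trace 𝕜 b.toBasis, toMatrix_mul, toMatrix_adjoint b b,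
    Matrix.trace_conjTranspose_mul_self_eq_zero_iff, LinearEquiv.map_eq_zero_iff]

theorem commute_of_isStarNormal_of_isSymmetricProjection {T p : E →ₗ[𝕜] E}
    (hT : IsStarNormal T) (hp : p.IsSymmetricProjection) (hTp : p * T * p = T * p) :
    Commute p T := by
  have hpp : p * p = p := hp.isIdempotentElem
  have hp_adj : adjoint p = p := hp.isSymmetric.adjoint_eq
  have hTT : adjoint T * T = T * adjoint T := by
    simpa [star_eq_adjoint] using hT.star_comm_self.eq
  set G := p * T - T * p
  -- `tr (G* G) = tr (p (T T* - T* T)) = 0`, using `p² = p` and `p T p = T p`.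
  have hG_adj : adjoint G = adjoint T * p - p * adjoint T := by
    simp [G, Module.End.mul_eq_comp, adjoint_comp, hp_adj]
  have hGG : adjoint G * G = adjoint T * (p * T) - adjoint T * T * p
      - (p * adjoint T) * (p * T) + p * (adjoint T * T * p) := by
    calc adjoint G * G = adjoint T * (p * p) * T - adjoint T * (p * T * p)
          - (p * adjoint T) * (p * T) + p * adjoint T * T * p := by
          rw [hG_adj]; simp only [G]; noncomm_ring
      _ = _ := by rw [hpp, hTp]; noncomm_ring
  have h₁ : trace 𝕜 E (adjoint T * (p * T)) = trace 𝕜 E (p * (T * adjoint T)) := by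
    rw [trace_mul_comm, mul_assoc]
  have h₂ : trace 𝕜 E (p * adjoint T * (p * T)) = trace 𝕜 E (p * (adjoint T * T)) := by
    rw [trace_mul_comm, ← mul_assoc, hTp, mul_assoc, trace_mul_comm, mul_assoc]
  have h₃ : trace 𝕜 E (p * (adjoint T * T * p)) = trace 𝕜 E (adjoint T * T * p) := by
    rw [trace_mul_comm, mul_assoc, hpp]
  have key : trace 𝕜 E (adjoint G * G) = 0 := by
    rw [hGG, map_add, map_sub, map_sub, h₁, h₂, h₃, hTT]
    abel
  exact sub_eq_zero.mp (trace_adjoint_mul_self_eq_zero_iff.mp key)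

theorem mem_invtSubmodule_adjoint_of_isStarNormal {T : E →ₗ[𝕜] E} (hT : IsStarNormal T)
    {W : Submodule 𝕜 E} (hW : W ∈ invtSubmodule T) : W ∈ invtSubmodule (adjoint T) := by
  let p : E →ₗ[𝕜] E := W.starProjection
  have hp : p.IsSymmetricProjection := W.isSymmetricProjection_starProjection
  have hTp : p * T * p = T * p := by
    ext x
    exact W.starProjection_eq_self_iff.mpr (hW (W.starProjection_apply_mem x))
  have hpT : Commute p (adjoint T) := by
    simpa [star_eq_adjoint, hp.isSymmetric.adjoint_eq] using
      (commute_of_isStarNormal_of_isSymmetricProjection hT hp hTp).star_star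
  intro x hx
  have hpx : p x = x := W.starProjection_eq_self_iff.mpr hx
  rw [Submodule.mem_comap, ← hpx, ← Module.End.mul_apply, ← hpT.eq]
  exact W.starProjection_apply_mem _

theorem mem_invtSubmodule_of_isSelfAdjoint_add_skew {S K : E →ₗ[𝕜] E} (hS : adjoint S = S)
    (hK : adjoint K = -K) (hSK : Commute S K) {W : Submodule 𝕜 E}
    (hW : W ∈ invtSubmodule (S + K)) : W ∈ invtSubmodule K := by
  have h_adj : adjoint (S + K) = S - K := by rw [map_add, hS, hK, sub_eq_add_neg]
  have hnormal : IsStarNormal (S + K) := by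
    rw [isStarNormal_iff, star_eq_adjoint, h_adj]
    exact ((Commute.refl S).add_right hSK).sub_left (hSK.symm.add_right (Commute.refl K))
  have hW' := mem_invtSubmodule_adjoint_of_isStarNormal hnormal hW
  rw [h_adj] at hW'
  intro x hx
  have hKx : K x = (2 : 𝕜)⁻¹ • ((S + K) x - (S - K) x) := by
    rw [add_apply, sub_apply, add_sub_sub_cancel, ← two_smul 𝕜, smul_smul,
      inv_mul_cancel₀ two_ne_zero, one_smul]
  rw [Submodule.mem_comap, hKx]
  exact W.smul_mem _ (W.sub_mem (hW hx) (hW' hx))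

end LinearMap

section BilinearForm

variable {R M : Type*} [CommRing R] [AddCommGroup M] [Module R M]

def IsAdjointPairOn (ip : M →ₗ[R] M →ₗ[R] R) (P : Submodule R M) (f f' : Module.End R M) :
    Prop :=
  ∀ x ∈ P, ∀ y ∈ P, ip (f x) y = ip x (f' y)

variable {ip : M →ₗ[R] M →ₗ[R] R}

theorem isAdjointPairOn_of_eq_smul {P : Submodule R M} {f f' : Module.End R M} (c : R)
    (hf : ∀ x ∈ P, f x = c • x) (hf' : ∀ x ∈ P, f' x = c • x) : IsAdjointPairOn ip P f f' := by
  intro x hx y hy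
  rw [hf x hx, hf' y hy, map_smul, LinearMap.smul_apply, map_smul]

theorem mem_invtSubmodule_of_eq_smul {P : Submodule R M} {f : Module.End R M} (c : R)
    (hf : ∀ x ∈ P, f x = c • x) : P ∈ invtSubmodule f := by
  intro x hx
  rw [Submodule.mem_comap, hf x hx]
  exact P.smul_mem c hx

theorem ortho_span_singleton_left {B : M} {Q : Submodule R M} (h : ∀ y ∈ Q, ip B y = 0) :
    ∀ x ∈ Submodule.span R {B}, ∀ y ∈ Q, ip x y = 0 := by
  intro x hx y hy
  obtain ⟨t, rfl⟩ := Submodule.mem_span_singleton.mp hx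
  rw [map_smul, LinearMap.smul_apply, h y hy, smul_zero]

theorem ortho_sup_left {P Q U : Submodule R M} (hP : ∀ x ∈ P, ∀ y ∈ U, ip x y = 0)
    (hQ : ∀ x ∈ Q, ∀ y ∈ U, ip x y = 0) : ∀ x ∈ P ⊔ Q, ∀ y ∈ U, ip x y = 0 := by
  intro x hx y hy
  obtain ⟨p, hp, q, hq, rfl⟩ := Submodule.mem_sup.mp hx
  rw [map_add, LinearMap.add_apply, hP p hp y hy, hQ q hq y hy, add_zero]

theorem IsAdjointPairOn.sup (hsymm : ∀ x y, ip x y = ip y x) {P Q : Submodule R M}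
    {f f' : Module.End R M} (hP : IsAdjointPairOn ip P f f') (hQ : IsAdjointPairOn ip Q f f')
    (hPf : P ∈ invtSubmodule f) (hPf' : P ∈ invtSubmodule f') (hQf : Q ∈ invtSubmodule f)
    (hQf' : Q ∈ invtSubmodule f') (hPQ : ∀ x ∈ P, ∀ y ∈ Q, ip x y = 0) :
    IsAdjointPairOn ip (P ⊔ Q) f f' := by
  have hQP : ∀ x ∈ Q, ∀ y ∈ P, ip x y = 0 := fun x hx y hy => hsymm x y ▸ hPQ y hy x hx
  intro x hx y hy
  obtain ⟨p, hp, q, hq, rfl⟩ := Submodule.mem_sup.mp hx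
  obtain ⟨p', hp', q', hq', rfl⟩ := Submodule.mem_sup.mp hy
  simp only [map_add, LinearMap.add_apply, hP p hp p' hp', hQ q hq q' hq',
    hPQ _ (hPf hp) q' hq', hPQ p hp _ (hQf' hq'), hQP _ (hQf hq) p' hp', hQP q hq _ (hPf' hp')]

theorem isAdjointPairOn_span_singleton_sup_sup (hsymm : ∀ x y, ip x y = ip y x) {B : M}
    {𝔳 𝔷 : Submodule R M} (horthBv : ∀ V ∈ 𝔳, ip B V = 0) (horthBz : ∀ Z ∈ 𝔷, ip B Z = 0)
    (horthvz : ∀ V ∈ 𝔳, ∀ Z ∈ 𝔷, ip V Z = 0) {f f' : Module.End R M}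
    (hB : IsAdjointPairOn ip (Submodule.span R {B}) f f') (hv : IsAdjointPairOn ip 𝔳 f f')
    (hz : IsAdjointPairOn ip 𝔷 f f') (hfB : Submodule.span R {B} ∈ invtSubmodule f)
    (hf'B : Submodule.span R {B} ∈ invtSubmodule f') (hfv : 𝔳 ∈ invtSubmodule f)
    (hf'v : 𝔳 ∈ invtSubmodule f') (hfz : 𝔷 ∈ invtSubmodule f) (hf'z : 𝔷 ∈ invtSubmodule f') :
    IsAdjointPairOn ip (Submodule.span R {B} ⊔ 𝔳 ⊔ 𝔷) f f' := by
  have hBv := ortho_span_singleton_left horthBv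
  refine (hB.sup hsymm hv hfB hf'B hfv hf'v hBv).sup hsymm hz
    (invtSubmodule.sup_mem hfB hfv) (invtSubmodule.sup_mem hf'B hf'v) hfz hf'z ?_
  exact ortho_sup_left (ortho_span_singleton_left horthBz) horthvz

theorem apply_eq_self_of_mem_of_disjoint {π τ : M →ₗ[R] M} {P N : Submodule R M}
    (hπ : ∀ x, π x ∈ P) (hτ : ∀ x, τ x ∈ N) (hπτ : ∀ x, π x + τ x = x) (hPN : Disjoint P N)
    {y : M} (hy : y ∈ N) : τ y = y := by
  have hπy : π y = 0 := by
    refine Submodule.disjoint_def.mp hPN _ (hπ y) ?_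
    rw [eq_sub_of_add_eq (hπτ y)]
    exact N.sub_mem hy (hτ y)
  simpa [hπy] using hπτ y

theorem disjoint_span_singleton_sup_sup {P 𝔳 𝔷 : Submodule R M} {B : M}
    (h : ∀ T ∈ P, ∀ t : R, ∀ V ∈ 𝔳, ∀ Z ∈ 𝔷, T + t • B + V + Z = 0 → T = 0) :
    Disjoint P (Submodule.span R {B} ⊔ 𝔳 ⊔ 𝔷) := by
  refine Submodule.disjoint_def.mpr fun x hxP hxN => ?_
  obtain ⟨y, hy, Z, hZ, rfl⟩ := Submodule.mem_sup.mp hxN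
  obtain ⟨w, hw, V, hV, rfl⟩ := Submodule.mem_sup.mp hy
  obtain ⟨t, rfl⟩ := Submodule.mem_span_singleton.mp hw
  refine h _ hxP (-t) (-V) (𝔳.neg_mem hV) (-Z) (𝔷.neg_mem hZ) ?_
  rw [neg_smul]
  abel

end BilinearForm

section RealBilinearForm

variable {V : Type*} [AddCommGroup V] [Module ℝ V] (ip : V →ₗ[ℝ] V →ₗ[ℝ] ℝ)

@[reducible] def innerProductCoreOfPosOn (hsymm : ∀ x y, ip x y = ip y x) (N : Submodule ℝ V)
    (hpos : ∀ x ∈ N, x ≠ 0 → 0 < ip x x) : InnerProductSpace.Core ℝ N where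
  inner x y := ip x y
  conj_inner_symm x y := hsymm y x
  re_inner_nonneg x := by
    rcases eq_or_ne (x : V) 0 with hx | hx
    · simp [hx]
    · exact (hpos x x.2 hx).le
  add_left x y z := by simp
  smul_left x y r := by simp
  definite x hx := Subtype.ext (not_imp_comm.mp (hpos x x.2) hx.symm.not_lt)

variable {ip}

theorem mem_invtSubmodule_of_isAdjointPairOn (hsymm : ∀ x y, ip x y = ip y x)
    {N : Submodule ℝ V} [FiniteDimensional ℝ N] (hpos : ∀ x ∈ N, x ≠ 0 → 0 < ip x x)
    {S K : Module.End ℝ V} (hSN : N ∈ invtSubmodule S) (hKN : N ∈ invtSubmodule K)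
    (hS : IsAdjointPairOn ip N S S) (hK : IsAdjointPairOn ip N K (-K)) (hSK : Commute S K)
    {W : Submodule ℝ V} (hWN : W ≤ N) (hW : W ∈ invtSubmodule (S + K)) :
    W ∈ invtSubmodule K := by
  let core := innerProductCoreOfPosOn ip hsymm N hpos
  let _ : NormedAddCommGroup N := core.toNormedAddCommGroup
  let _ : InnerProductSpace ℝ N := InnerProductSpace.ofCore core.toCore
  let S' := S.restrict hSN
  let K' := K.restrict hKN
  have hS' : adjoint S' = S' :=
    ((eq_adjoint_iff S' S').mpr fun x y => hS x x.2 y y.2).symm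
  have hK' : adjoint K' = -K' :=
    ((eq_adjoint_iff _ _).mpr fun x y => by
      change ip (-K x) y = ip x (K y)
      rw [map_neg, LinearMap.neg_apply, hK x x.2 y y.2, LinearMap.neg_apply, map_neg,
        neg_neg]).symm
  have hSK' : Commute S' K' := LinearMap.ext fun x => Subtype.ext (LinearMap.congr_fun hSK.eq x)
  have hW' : W.comap N.subtype ∈ invtSubmodule (S' + K') := fun x hx => hW hx
  intro x hx
  exact mem_invtSubmodule_of_isSelfAdjoint_add_skew hS' hK' hSK' hW' (x := ⟨x, hWN hx⟩) hx

end RealBilinearForm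

theorem LieAlgebra.commute_ad_of_lie_eq_zero {R L : Type*} [CommRing R] [LieRing L]
    [LieAlgebra R L] {x y : L} (h : ⁅x, y⁆ = 0) : Commute (ad R L x) (ad R L y) := by
  refine LinearMap.ext fun z => ?_
  simp only [Module.End.mul_apply, ad_apply]
  rw [leibniz_lie, h, zero_lie, zero_add]

theorem LieSubalgebra.map_mem_invtSubmodule_ad {R L : Type*} [CommRing R] [LieRing L]
    [LieAlgebra R L] (𝔰 : LieSubalgebra R L) {π τ : L →ₗ[R] L} {N : Submodule R L}
    (hπτ : ∀ x, π x + τ x = x) (hτ : ∀ x, τ x ∈ N) (hτN : ∀ y ∈ N, τ y = y) {X : L}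
    (hX : X ∈ 𝔰) (hXπ : ∀ s ∈ 𝔰, ⁅X, π s⁆ = 0) (hXN : N ∈ invtSubmodule (LieAlgebra.ad R L X)) :
    𝔰.toSubmodule.map τ ∈ invtSubmodule (LieAlgebra.ad R L X) := by
  rintro _ ⟨s, hs, rfl⟩
  have hXs : ⁅X, s⁆ = ⁅X, τ s⁆ := by
    conv_lhs => rw [← hπτ s]
    rw [lie_add, hXπ s hs, zero_add]
  exact ⟨⁅X, s⁆, 𝔰.lie_mem hX hs, by rw [hXs]; exact hτN _ (hXN (hτ s))⟩

section RankOne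

open LieAlgebra Submodule

variable {g : Type*} [LieRing g] [LieAlgebra ℝ g] {ip : g →ₗ[ℝ] g →ₗ[ℝ] ℝ} {B : g}
  {𝔳 𝔷 : Submodule ℝ g}

theorem ad_mem_invtSubmodule_and_isAdjointPairOn_of_grading (hsymm : ∀ x y, ip x y = ip y x)
    (hBv : ∀ V ∈ 𝔳, ⁅B, V⁆ = V) (hBz : ∀ Z ∈ 𝔷, ⁅B, Z⁆ = (2 : ℝ) • Z)
    (horthBv : ∀ V ∈ 𝔳, ip B V = 0) (horthBz : ∀ Z ∈ 𝔷, ip B Z = 0)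
    (horthvz : ∀ V ∈ 𝔳, ∀ Z ∈ 𝔷, ip V Z = 0) :
    span ℝ {B} ⊔ 𝔳 ⊔ 𝔷 ∈ invtSubmodule (ad ℝ g B) ∧
      IsAdjointPairOn ip (span ℝ {B} ⊔ 𝔳 ⊔ 𝔷) (ad ℝ g B) (ad ℝ g B) := by
  have h𝔞 : ∀ x ∈ span ℝ {B}, ad ℝ g B x = (0 : ℝ) • x := by
    intro x hx
    obtain ⟨t, rfl⟩ := mem_span_singleton.mp hx
    rw [ad_apply, lie_smul, lie_self, smul_zero, zero_smul]
  have h𝔳 : ∀ V ∈ 𝔳, ad ℝ g B V = (1 : ℝ) • V := fun V hV => by rw [one_smul]; exact hBv V hV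
  have h𝔷 : ∀ Z ∈ 𝔷, ad ℝ g B Z = (2 : ℝ) • Z := hBz
  have inv𝔞 := mem_invtSubmodule_of_eq_smul _ h𝔞
  have inv𝔳 := mem_invtSubmodule_of_eq_smul _ h𝔳
  have inv𝔷 := mem_invtSubmodule_of_eq_smul _ h𝔷
  exact ⟨invtSubmodule.sup_mem (invtSubmodule.sup_mem inv𝔞 inv𝔳) inv𝔷,
    isAdjointPairOn_span_singleton_sup_sup hsymm horthBv horthBz horthvz
      (isAdjointPairOn_of_eq_smul _ h𝔞 h𝔞) (isAdjointPairOn_of_eq_smul _ h𝔳 h𝔳)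
      (isAdjointPairOn_of_eq_smul _ h𝔷 h𝔷) inv𝔞 inv𝔞 inv𝔳 inv𝔳 inv𝔷 inv𝔷⟩

theorem ad_mem_invtSubmodule_and_isAdjointPairOn_neg {T : g} (hsymm : ∀ x y, ip x y = ip y x)
    (hTB : ⁅T, B⁆ = 0) (hTv : ∀ V ∈ 𝔳, ⁅T, V⁆ ∈ 𝔳) (hTz : ∀ Z ∈ 𝔷, ⁅T, Z⁆ ∈ 𝔷)
    (hskew : ∀ X ∈ 𝔳 ⊔ 𝔷, ∀ Y ∈ 𝔳 ⊔ 𝔷, ip ⁅T, X⁆ Y = -ip X ⁅T, Y⁆)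
    (horthBv : ∀ V ∈ 𝔳, ip B V = 0) (horthBz : ∀ Z ∈ 𝔷, ip B Z = 0)
    (horthvz : ∀ V ∈ 𝔳, ∀ Z ∈ 𝔷, ip V Z = 0) :
    span ℝ {B} ⊔ 𝔳 ⊔ 𝔷 ∈ invtSubmodule (ad ℝ g T) ∧
      IsAdjointPairOn ip (span ℝ {B} ⊔ 𝔳 ⊔ 𝔷) (ad ℝ g T) (-ad ℝ g T) := by
  have hneg : ∀ {P : Submodule ℝ g}, P ∈ invtSubmodule (ad ℝ g T) →
      P ∈ invtSubmodule (-ad ℝ g T) := fun {P} h x hx => P.neg_mem (h hx)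
  have h𝔞 : ∀ x ∈ span ℝ {B}, ad ℝ g T x = (0 : ℝ) • x := by
    intro x hx
    obtain ⟨t, rfl⟩ := mem_span_singleton.mp hx
    rw [ad_apply, lie_smul, hTB, smul_zero, zero_smul]
  have h𝔞' : ∀ x ∈ span ℝ {B}, (-ad ℝ g T) x = (0 : ℝ) • x := fun x hx => by
    rw [LinearMap.neg_apply, h𝔞 x hx, zero_smul, neg_zero]
  have inv𝔞 := mem_invtSubmodule_of_eq_smul _ h𝔞
  have inv𝔳 : 𝔳 ∈ invtSubmodule (ad ℝ g T) := hTv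
  have inv𝔷 : 𝔷 ∈ invtSubmodule (ad ℝ g T) := hTz
  have skew : ∀ {P : Submodule ℝ g}, P ≤ 𝔳 ⊔ 𝔷 → IsAdjointPairOn ip P (ad ℝ g T) (-ad ℝ g T) :=
    fun {P} hP X hX Y hY => by
      rw [LinearMap.neg_apply, map_neg, ad_apply, ad_apply, hskew X (hP hX) Y (hP hY)]
  exact ⟨invtSubmodule.sup_mem (invtSubmodule.sup_mem inv𝔞 inv𝔳) inv𝔷,
    isAdjointPairOn_span_singleton_sup_sup hsymm horthBv horthBz horthvz
      (isAdjointPairOn_of_eq_smul _ h𝔞 h𝔞') (skew le_sup_left) (skew le_sup_right) inv𝔞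
      (hneg inv𝔞) inv𝔳 (hneg inv𝔳) inv𝔷 (hneg inv𝔷)⟩

end RankOne

theorem sn_normalized_by_Btilde_general
    (g : Type*) [LieRing g] [LieAlgebra ℝ g] [FiniteDimensional ℝ g]
    (𝔨 : LieSubalgebra ℝ g) (B : g) (𝔳 𝔷 : Submodule ℝ g)
    -- vector space direct sum decomposition 𝔤 = 𝔨 ⊕ ℝB ⊕ 𝔳 ⊕ 𝔷
    (hindep : ∀ T ∈ 𝔨, ∀ t : ℝ, ∀ V ∈ 𝔳, ∀ Z ∈ 𝔷,
      T + t • B + V + Z = 0 → T = 0 ∧ t = 0 ∧ V = 0 ∧ Z = 0)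
    -- bracket relations
    (hkB : ∀ T ∈ 𝔨, ⁅T, B⁆ = 0)
    (hkv : ∀ T ∈ 𝔨, ∀ V ∈ 𝔳, ⁅T, V⁆ ∈ 𝔳)
    (hkz : ∀ T ∈ 𝔨, ∀ Z ∈ 𝔷, ⁅T, Z⁆ ∈ 𝔷)
    (hBv : ∀ V ∈ 𝔳, ⁅B, V⁆ = V)
    (hBz : ∀ Z ∈ 𝔷, ⁅B, Z⁆ = (2 : ℝ) • Z)
    -- an inner product on ℝB ⊕ 𝔳 ⊕ 𝔷: ℝB, 𝔳, 𝔷 mutually orthogonal,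
    -- and ad(T)|𝔫 skew-symmetric for every T ∈ 𝔨
    (ip : g →ₗ[ℝ] g →ₗ[ℝ] ℝ)
    (hip_symm : ∀ x y : g, ip x y = ip y x)
    (hip_pos : ∀ x ∈ Submodule.span ℝ {B} ⊔ 𝔳 ⊔ 𝔷, x ≠ 0 → 0 < ip x x)
    (horthBv : ∀ V ∈ 𝔳, ip B V = 0)
    (horthBz : ∀ Z ∈ 𝔷, ip B Z = 0)
    (horthvz : ∀ V ∈ 𝔳, ∀ Z ∈ 𝔷, ip V Z = 0)
    (hskew : ∀ T ∈ 𝔨, ∀ X ∈ 𝔳 ⊔ 𝔷, ∀ Y ∈ 𝔳 ⊔ 𝔷, ip ⁅T, X⁆ Y = -ip X ⁅T, Y⁆)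
    -- the projections π : 𝔤 → 𝔨 and τ : 𝔤 → ℝB ⊕ 𝔳 ⊕ 𝔷
    (π τ : g →ₗ[ℝ] g)
    (hπ : ∀ x : g, π x ∈ 𝔨.toSubmodule)
    (hτ : ∀ x : g, τ x ∈ Submodule.span ℝ {B} ⊔ 𝔳 ⊔ 𝔷)
    (hπτ : ∀ x : g, π x + τ x = x)
    -- the subalgebra 𝔰, with 𝔰_c = π(𝔰) abelian and B ∈ 𝔰_n = τ(𝔰)
    (𝔰 : LieSubalgebra ℝ g)
    (hsc : ∀ x ∈ Submodule.map π 𝔰.toSubmodule, ∀ y ∈ Submodule.map π 𝔰.toSubmodule,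
      ⁅x, y⁆ = 0)
    -- the element B̃ ∈ 𝔰_c with B̃ + B ∈ 𝔰
    (Btil : g) (hBtil_c : Btil ∈ Submodule.map π 𝔰.toSubmodule) (hBtilB : Btil + B ∈ 𝔰) :
    ∀ x ∈ Submodule.map τ 𝔰.toSubmodule, ⁅Btil, x⁆ ∈ Submodule.map τ 𝔰.toSubmodule := by
  have hBtil : Btil ∈ 𝔨 := by
    obtain ⟨s, -, rfl⟩ := hBtil_c
    exact hπ s
  have hτN : ∀ y ∈ Submodule.span ℝ {B} ⊔ 𝔳 ⊔ 𝔷, τ y = y := fun y =>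
    apply_eq_self_of_mem_of_disjoint hπ hτ hπτ <| disjoint_span_singleton_sup_sup
      fun T hT t V hV Z hZ h => (hindep T hT t V hV Z hZ h).1
  obtain ⟨hSN, hS⟩ := ad_mem_invtSubmodule_and_isAdjointPairOn_of_grading hip_symm hBv hBz
    horthBv horthBz horthvz
  obtain ⟨hKN, hK⟩ := ad_mem_invtSubmodule_and_isAdjointPairOn_neg hip_symm (hkB Btil hBtil)
    (hkv Btil hBtil) (hkz Btil hBtil) (hskew Btil hBtil) horthBv horthBz horthvz
  have hsn : 𝔰.toSubmodule.map τ ∈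
      invtSubmodule (LieAlgebra.ad ℝ g B + LieAlgebra.ad ℝ g Btil) := by
    rw [add_comm, ← map_add]
    refine 𝔰.map_mem_invtSubmodule_ad hπτ hτ hτN hBtilB (fun s hs => ?_) ?_
    · rw [add_lie, hsc _ hBtil_c _ ⟨s, hs, rfl⟩, ← lie_skew, hkB _ (hπ s), neg_zero, add_zero]
    · rw [map_add]
      exact invtSubmodule_inf_invtSubmodule_le_invtSubmodule_add _ _ ⟨hKN, hSN⟩
  exact mem_invtSubmodule_of_isAdjointPairOn hip_symm hip_pos hSN hKN hS hK
    (LieAlgebra.commute_ad_of_lie_eq_zero (by rw [← lie_skew, hkB Btil hBtil, neg_zero]))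
    (Submodule.map_le_iff_le_comap.mpr fun s _ => hτ s) hsn

/-- In the setting of the Iwasawa decomposition `𝔤 = 𝔨 ⊕ ℝB ⊕ 𝔳 ⊕ 𝔷` of a rank-one
symmetric space of noncompact type: if `𝔰` is a Lie subalgebra with `𝔰_c = π 𝔰` abelian
and `B ∈ 𝔰_n = τ 𝔰`, and `B̃ ∈ 𝔰_c` satisfies `B̃ + B ∈ 𝔰`, then `[B̃, 𝔰_n] ⊆ 𝔰_n`,
i.e. `𝔰_n` is normalized by `B̃`. -/
theorem sn_normalized_by_Btilde
    (g : Type*) [LieRing g] [LieAlgebra ℝ g] [FiniteDimensional ℝ g]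
    (𝔨 : LieSubalgebra ℝ g) (B : g) (hB : B ≠ 0) (𝔳 𝔷 : Submodule ℝ g)
    -- vector space direct sum decomposition 𝔤 = 𝔨 ⊕ ℝB ⊕ 𝔳 ⊕ 𝔷
    (hsum : 𝔨.toSubmodule ⊔ Submodule.span ℝ {B} ⊔ 𝔳 ⊔ 𝔷 = ⊤)
    (hindep : ∀ T ∈ 𝔨, ∀ t : ℝ, ∀ V ∈ 𝔳, ∀ Z ∈ 𝔷,
      T + t • B + V + Z = 0 → T = 0 ∧ t = 0 ∧ V = 0 ∧ Z = 0)
    -- bracket relations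
    (hkB : ∀ T ∈ 𝔨, ⁅T, B⁆ = 0)
    (hkv : ∀ T ∈ 𝔨, ∀ V ∈ 𝔳, ⁅T, V⁆ ∈ 𝔳)
    (hkz : ∀ T ∈ 𝔨, ∀ Z ∈ 𝔷, ⁅T, Z⁆ ∈ 𝔷)
    (hBv : ∀ V ∈ 𝔳, ⁅B, V⁆ = V)
    (hBz : ∀ Z ∈ 𝔷, ⁅B, Z⁆ = (2 : ℝ) • Z)
    (hvv : ∀ V ∈ 𝔳, ∀ W ∈ 𝔳, ⁅V, W⁆ ∈ 𝔷)
    (hvz : ∀ V ∈ 𝔳, ∀ Z ∈ 𝔷, ⁅V, Z⁆ = 0)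
    (hzz : ∀ Z ∈ 𝔷, ∀ Z' ∈ 𝔷, ⁅Z, Z'⁆ = 0)
    -- an inner product on ℝB ⊕ 𝔳 ⊕ 𝔷: ℝB, 𝔳, 𝔷 mutually orthogonal,
    -- and ad(T)|𝔫 skew-symmetric for every T ∈ 𝔨
    (ip : g →ₗ[ℝ] g →ₗ[ℝ] ℝ)
    (hip_symm : ∀ x y : g, ip x y = ip y x)
    (hip_pos : ∀ x ∈ Submodule.span ℝ {B} ⊔ 𝔳 ⊔ 𝔷, x ≠ 0 → 0 < ip x x)
    (horthBv : ∀ V ∈ 𝔳, ip B V = 0)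
    (horthBz : ∀ Z ∈ 𝔷, ip B Z = 0)
    (horthvz : ∀ V ∈ 𝔳, ∀ Z ∈ 𝔷, ip V Z = 0)
    (hskew : ∀ T ∈ 𝔨, ∀ X ∈ 𝔳 ⊔ 𝔷, ∀ Y ∈ 𝔳 ⊔ 𝔷, ip ⁅T, X⁆ Y = -ip X ⁅T, Y⁆)
    -- the projections π : 𝔤 → 𝔨 and τ : 𝔤 → ℝB ⊕ 𝔳 ⊕ 𝔷
    (π τ : g →ₗ[ℝ] g)
    (hπ : ∀ x : g, π x ∈ 𝔨.toSubmodule)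
    (hτ : ∀ x : g, τ x ∈ Submodule.span ℝ {B} ⊔ 𝔳 ⊔ 𝔷)
    (hπτ : ∀ x : g, π x + τ x = x)
    -- the subalgebra 𝔰, with 𝔰_c = π(𝔰) abelian and B ∈ 𝔰_n = τ(𝔰)
    (𝔰 : LieSubalgebra ℝ g)
    (hsc : ∀ x ∈ Submodule.map π 𝔰.toSubmodule, ∀ y ∈ Submodule.map π 𝔰.toSubmodule,
      ⁅x, y⁆ = 0)
    (hBsn : B ∈ Submodule.map τ 𝔰.toSubmodule)
    -- the element B̃ ∈ 𝔰_c with B̃ + B ∈ 𝔰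
    (Btil : g) (hBtil_c : Btil ∈ Submodule.map π 𝔰.toSubmodule) (hBtilB : Btil + B ∈ 𝔰) :
    ∀ x ∈ Submodule.map τ 𝔰.toSubmodule, ⁅Btil, x⁆ ∈ Submodule.map τ 𝔰.toSubmodule :=
  sn_normalized_by_Btilde_general g 𝔨 B 𝔳 𝔷 hindep hkB hkv hkz hBv hBz ip hip_symm hip_pos horthBv
    horthBz horthvz hskew π τ hπ hτ hπτ 𝔰 hsc Btil hBtil_c hBtilB
end

section
/- Let 𝔤 be a finite-dimensional real Lie algebra with a vector space direct sum decomposition 𝔤 = 𝔨 ⊕ 𝔞 ⊕ 𝔳 ⊕ 𝔷 in which 𝔨 is a Lie subalgebra, 𝔞 = ℝB is one-dimensional, and the bracket satisfies [𝔨,B] = 0, [𝔨,𝔳] ⊆ 𝔳, [𝔨,𝔷] ⊆ 𝔷, [B,V] = V for all V ∈ 𝔳, [B,Z] = 2Z for all Z ∈ 𝔷, [𝔳,𝔳] ⊆ 𝔷, [𝔳,𝔷] = 0 and [𝔷,𝔷] = 0. Write 𝔫 = 𝔳 ⊕ 𝔷, fix an inner product on 𝔞 ⊕ 𝔫 in which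 𝔞, 𝔳, 𝔷 are mutually orthogonal and for which ad(T)|𝔫 is skew-symmetric for every T ∈ 𝔨, and let π : 𝔤 → 𝔨 and τ : 𝔤 → 𝔞 ⊕ 𝔫 be the projections. Let 𝔰 ⊆ 𝔤 be a Lie subalgebra with 𝔰_c := π(𝔰) abelian and B ∈ 𝔰_n := τ(𝔰), choose B̃ ∈ 𝔰_c with B̃ + B ∈ 𝔰, and set 𝔱 = 𝔨 ∩ 𝔰 and 𝔰′ = ℝ(B̃ + B) + [𝔰,𝔰]. Then 𝔰′ is a Lie subalgebra of 𝔰 which is an ideal of 𝔰, and 𝔰 = 𝔱 ⊕ 𝔰′ as vector spaces. -/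
/-- In the setting of the Iwasawa decomposition `𝔤 = 𝔨 ⊕ ℝB ⊕ 𝔳 ⊕ 𝔷` of a rank-one
symmetric space of noncompact type: if `𝔰` is a Lie subalgebra with `𝔰_c = π 𝔰` abelian
and `B ∈ 𝔰_n = τ 𝔰`, `B̃ ∈ 𝔰_c` satisfies `B̃ + B ∈ 𝔰`, and we set `𝔱 = 𝔨 ∩ 𝔰` and
`𝔰′ = ℝ(B̃ + B) + [𝔰,𝔰]`, then `𝔰′` is a Lie subalgebra of `𝔰` which is an ideal of `𝔰`,
and `𝔰 = 𝔱 ⊕ 𝔰′` as vector spaces. -/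
theorem s_eq_t_oplus_sprime
    (g : Type*) [LieRing g] [LieAlgebra ℝ g] [FiniteDimensional ℝ g]
    (𝔨 : LieSubalgebra ℝ g) (B : g) (hB : B ≠ 0) (𝔳 𝔷 : Submodule ℝ g)
    -- vector space direct sum decomposition 𝔤 = 𝔨 ⊕ ℝB ⊕ 𝔳 ⊕ 𝔷
    (hsum : 𝔨.toSubmodule ⊔ Submodule.span ℝ {B} ⊔ 𝔳 ⊔ 𝔷 = ⊤)
    (hindep : ∀ T ∈ 𝔨, ∀ t : ℝ, ∀ V ∈ 𝔳, ∀ Z ∈ 𝔷,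
      T + t • B + V + Z = 0 → T = 0 ∧ t = 0 ∧ V = 0 ∧ Z = 0)
    -- bracket relations
    (hkB : ∀ T ∈ 𝔨, ⁅T, B⁆ = 0)
    (hkv : ∀ T ∈ 𝔨, ∀ V ∈ 𝔳, ⁅T, V⁆ ∈ 𝔳)
    (hkz : ∀ T ∈ 𝔨, ∀ Z ∈ 𝔷, ⁅T, Z⁆ ∈ 𝔷)
    (hBv : ∀ V ∈ 𝔳, ⁅B, V⁆ = V)
    (hBz : ∀ Z ∈ 𝔷, ⁅B, Z⁆ = (2 : ℝ) • Z)
    (hvv : ∀ V ∈ 𝔳, ∀ W ∈ 𝔳, ⁅V, W⁆ ∈ 𝔷)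
    (hvz : ∀ V ∈ 𝔳, ∀ Z ∈ 𝔷, ⁅V, Z⁆ = 0)
    (hzz : ∀ Z ∈ 𝔷, ∀ Z' ∈ 𝔷, ⁅Z, Z'⁆ = 0)
    -- an inner product on ℝB ⊕ 𝔳 ⊕ 𝔷: ℝB, 𝔳, 𝔷 mutually orthogonal,
    -- and ad(T)|𝔫 skew-symmetric for every T ∈ 𝔨
    (ip : g →ₗ[ℝ] g →ₗ[ℝ] ℝ)
    (hip_symm : ∀ x y : g, ip x y = ip y x)
    (hip_pos : ∀ x ∈ Submodule.span ℝ {B} ⊔ 𝔳 ⊔ 𝔷, x ≠ 0 → 0 < ip x x)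
    (horthBv : ∀ V ∈ 𝔳, ip B V = 0)
    (horthBz : ∀ Z ∈ 𝔷, ip B Z = 0)
    (horthvz : ∀ V ∈ 𝔳, ∀ Z ∈ 𝔷, ip V Z = 0)
    (hskew : ∀ T ∈ 𝔨, ∀ X ∈ 𝔳 ⊔ 𝔷, ∀ Y ∈ 𝔳 ⊔ 𝔷, ip ⁅T, X⁆ Y = -ip X ⁅T, Y⁆)
    -- the projections π : 𝔤 → 𝔨 and τ : 𝔤 → ℝB ⊕ 𝔳 ⊕ 𝔷
    (π τ : g →ₗ[ℝ] g)
    (hπ : ∀ x : g, π x ∈ 𝔨.toSubmodule)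
    (hτ : ∀ x : g, τ x ∈ Submodule.span ℝ {B} ⊔ 𝔳 ⊔ 𝔷)
    (hπτ : ∀ x : g, π x + τ x = x)
    -- the subalgebra 𝔰, with 𝔰_c = π(𝔰) abelian and B ∈ 𝔰_n = τ(𝔰)
    (𝔰 : LieSubalgebra ℝ g)
    (hsc : ∀ x ∈ Submodule.map π 𝔰.toSubmodule, ∀ y ∈ Submodule.map π 𝔰.toSubmodule,
      ⁅x, y⁆ = 0)
    (hBsn : B ∈ Submodule.map τ 𝔰.toSubmodule)
    -- the element B̃ ∈ 𝔰_c with B̃ + B ∈ 𝔰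
    (Btil : g) (hBtil_c : Btil ∈ Submodule.map π 𝔰.toSubmodule) (hBtilB : Btil + B ∈ 𝔰)
    -- 𝔱 = 𝔨 ∩ 𝔰 and 𝔰′ = ℝ(B̃ + B) + [𝔰,𝔰]
    (𝔱 𝔰' : Submodule ℝ g)
    (h𝔱 : 𝔱 = 𝔨.toSubmodule ⊓ 𝔰.toSubmodule)
    (h𝔰' : 𝔰' = Submodule.span ℝ {Btil + B} ⊔
      Submodule.span ℝ {x : g | ∃ a ∈ 𝔰, ∃ b ∈ 𝔰, x = ⁅a, b⁆}) :
    𝔰' ≤ 𝔰.toSubmodule ∧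
    (∀ x ∈ 𝔰', ∀ y ∈ 𝔰', ⁅x, y⁆ ∈ 𝔰') ∧
    (∀ x ∈ 𝔰, ∀ y ∈ 𝔰', ⁅x, y⁆ ∈ 𝔰') ∧
    𝔱 ⊔ 𝔰' = 𝔰.toSubmodule ∧ 𝔱 ⊓ 𝔰' = ⊥ := by

  classical
  obtain ⟨x₀, hx₀s, hx₀⟩ := hBtil_c
  have hBtilk : Btil ∈ 𝔨 := by rw [← hx₀]; exact hπ x₀
  have hBtilc : Btil ∈ Submodule.map π 𝔰.toSubmodule := ⟨x₀, hx₀s, hx₀⟩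
  set Q : Submodule ℝ g := Submodule.span ℝ {B} ⊔ 𝔳 ⊔ 𝔷 with hQdef
  set P : Submodule ℝ g := 𝔳 ⊔ 𝔷 with hPdef
  have h𝔳P : 𝔳 ≤ P := le_sup_left
  have h𝔷P : 𝔷 ≤ P := le_sup_right
  have hPQ : P ≤ Q := by rw [hQdef, hPdef, sup_assoc]; exact le_sup_right
  have hBQ : B ∈ Q :=
    Submodule.mem_sup_left (Submodule.mem_sup_left (Submodule.mem_span_singleton_self B))
  have hQdec : ∀ u ∈ Q, ∃ t : ℝ, ∃ V ∈ 𝔳, ∃ Z ∈ 𝔷, u = t • B + V + Z := by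
    intro u hu
    obtain ⟨a, ha, Z, hZ, hu'⟩ := Submodule.mem_sup.mp hu
    obtain ⟨b, hb, V, hV, ha'⟩ := Submodule.mem_sup.mp ha
    obtain ⟨t, hb'⟩ := Submodule.mem_span_singleton.mp hb
    exact ⟨t, V, hV, Z, hZ, by rw [← hu', ← ha', ← hb']⟩
  have huniq : ∀ T ∈ 𝔨, ∀ u ∈ Q, T + u = 0 → T = 0 ∧ u = 0 := by
    intro T hT u hu h
    obtain ⟨t, V, hV, Z, hZ, rfl⟩ := hQdec u hu
    obtain ⟨hT0, ht0, hV0, hZ0⟩ := hindep T hT t V hV Z hZ (by rw [← h]; abel)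
    exact ⟨hT0, by rw [ht0, hV0, hZ0]; simp⟩
  have hτk : ∀ T ∈ 𝔨, π T = T ∧ τ T = 0 := by
    intro T hT
    have h1 : (π T - T) + τ T = 0 := by
      rw [sub_add_eq_add_sub, hπτ T, sub_self]
    obtain ⟨h2, h3⟩ := huniq _ (sub_mem (hπ T) hT) _ (hτ T) h1
    exact ⟨by rwa [sub_eq_zero] at h2, h3⟩
  have hτQ : ∀ u ∈ Q, π u = 0 ∧ τ u = u := by
    intro u hu
    have h1 : π u + (τ u - u) = 0 := by
      rw [← add_sub_assoc, hπτ u, sub_self]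
    obtain ⟨h2, h3⟩ := huniq _ (hπ u) _ (sub_mem (hτ u) hu) h1
    exact ⟨h2, by rwa [sub_eq_zero] at h3⟩
  -- bracket lemmas
  have hbk : ∀ T ∈ 𝔨, ∀ u ∈ Q, ⁅T, u⁆ ∈ P := by
    intro T hT u hu
    obtain ⟨t, V, hV, Z, hZ, rfl⟩ := hQdec u hu
    have e : ⁅T, t • B + V + Z⁆ = ⁅T, V⁆ + ⁅T, Z⁆ := by
      rw [lie_add, lie_add, lie_smul, hkB T hT, smul_zero, zero_add]
    rw [e]
    exact add_mem (h𝔳P (hkv T hT V hV)) (h𝔷P (hkz T hT Z hZ))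
  have hnn : ∀ u ∈ Q, ∀ w ∈ Q, ⁅u, w⁆ ∈ P := by
    intro u hu w hw
    obtain ⟨t, V, hV, Z, hZ, rfl⟩ := hQdec u hu
    obtain ⟨s, V', hV', Z', hZ', rfl⟩ := hQdec w hw
    have h1 : ⁅V, B⁆ = -V := by rw [← lie_skew, hBv V hV]
    have h2 : ⁅Z, B⁆ = -((2 : ℝ) • Z) := by rw [← lie_skew, hBz Z hZ]
    have h3 : ⁅Z, V'⁆ = 0 := by rw [← lie_skew, hvz V' hV' Z hZ, neg_zero]
    have e : ⁅t • B + V + Z, s • B + V' + Z'⁆ =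
        (t • V' - s • V) + (t • ((2 : ℝ) • Z') - s • ((2 : ℝ) • Z) + ⁅V, V'⁆) := by
      simp only [add_lie, lie_add, smul_lie, lie_smul, lie_self, smul_zero, zero_add,
        add_zero, hBv V' hV', hBz Z' hZ', h1, h2, h3, hvz V hV Z' hZ', hzz Z hZ Z' hZ',
        smul_neg]
      module
    rw [e]
    exact add_mem
      (h𝔳P (sub_mem (Submodule.smul_mem _ _ hV') (Submodule.smul_mem _ _ hV)))
      (h𝔷P (add_mem (sub_mem (Submodule.smul_mem _ _ (Submodule.smul_mem _ _ hZ'))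
        (Submodule.smul_mem _ _ (Submodule.smul_mem _ _ hZ))) (hvv V hV V' hV')))
  have hbrack : ∀ a ∈ 𝔰, ∀ b ∈ 𝔰, ⁅a, b⁆ ∈ P := by
    intro a ha b hb
    have h1 : ⁅a, b⁆ = ⁅π a, π b⁆ + ⁅π a, τ b⁆ + ⁅τ a, π b⁆ + ⁅τ a, τ b⁆ := by
      conv_lhs => rw [← hπτ a, ← hπτ b]
      rw [add_lie, lie_add, lie_add]; abel
    rw [h1, hsc (π a) ⟨a, ha, rfl⟩ (π b) ⟨b, hb, rfl⟩, zero_add]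
    have h2 : ⁅τ a, π b⁆ = -⁅π b, τ a⁆ := by rw [← lie_skew]
    refine add_mem (add_mem (hbk _ (hπ a) _ (hτ b)) ?_) (hnn _ (hτ a) _ (hτ b))
    rw [h2]
    exact neg_mem (hbk _ (hπ b) _ (hτ a))
  -- the span of brackets
  set M : Submodule ℝ g :=
    Submodule.span ℝ {x : g | ∃ a ∈ 𝔰, ∃ b ∈ 𝔰, x = ⁅a, b⁆} with hMdef
  have hM_le_P : M ≤ P := by
    rw [hMdef]
    apply Submodule.span_le.mpr
    rintro x ⟨a, ha, b, hb, rfl⟩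
    exact hbrack a ha b hb
  have hM_le_s : M ≤ 𝔰.toSubmodule := by
    rw [hMdef]
    apply Submodule.span_le.mpr
    rintro x ⟨a, ha, b, hb, rfl⟩
    exact 𝔰.lie_mem ha hb
  have hM_le_s' : M ≤ 𝔰' := by rw [h𝔰']; exact le_sup_right
  have hBtB_s' : Btil + B ∈ 𝔰' := by
    rw [h𝔰']
    exact Submodule.mem_sup_left (Submodule.mem_span_singleton_self _)
  have h𝔰'_le_s : 𝔰' ≤ 𝔰.toSubmodule := by
    rw [h𝔰']
    refine sup_le ?_ hM_le_s
    rw [Submodule.span_le, Set.singleton_subset_iff]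
    exact hBtilB
  have hmemM : ∀ a ∈ 𝔰, ∀ b ∈ 𝔰, ⁅a, b⁆ ∈ 𝔰' := by
    intro a ha b hb
    exact hM_le_s' (Submodule.subset_span ⟨a, ha, b, hb, rfl⟩)
  -- the submodule N₀
  set N₀ : Submodule ℝ g := (Submodule.map τ 𝔰.toSubmodule) ⊓ P with hN₀def
  have hτBtB : τ (Btil + B) = B := by
    rw [map_add, (hτk Btil hBtilk).2, (hτQ B hBQ).2, zero_add]
  have hL : ∀ v ∈ N₀, ⁅Btil + B, v⁆ ∈ N₀ ∧ ⁅Btil + B, v⁆ ∈ 𝔰' := by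
    intro v hv
    obtain ⟨hv1, hv2⟩ := Submodule.mem_inf.mp hv
    obtain ⟨x, hx, hτx⟩ := hv1
    obtain ⟨V, hV, Z, hZ, hVZ⟩ := Submodule.mem_sup.mp hv2
    have hbx : ⁅Btil + B, x⁆ = ⁅Btil + B, v⁆ := by
      conv_lhs => rw [← hπτ x]
      rw [lie_add, hτx]
      have h1 : ⁅Btil, π x⁆ = 0 := hsc Btil hBtilc (π x) ⟨x, hx, rfl⟩
      have h2 : ⁅B, π x⁆ = 0 := by rw [← lie_skew, hkB (π x) (hπ x), neg_zero]
      rw [add_lie, h1, h2, add_zero, zero_add]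
    have hmemP : ⁅Btil + B, v⁆ ∈ P := by
      rw [← hVZ]
      have e : ⁅Btil + B, V + Z⁆ = (⁅Btil, V⁆ + V) + (⁅Btil, Z⁆ + (2 : ℝ) • Z) := by
        rw [add_lie, lie_add, lie_add, hBv V hV, hBz Z hZ]; abel
      rw [e]
      exact add_mem (h𝔳P (add_mem (hkv Btil hBtilk V hV) hV))
        (h𝔷P (add_mem (hkz Btil hBtilk Z hZ) (Submodule.smul_mem _ _ hZ)))
    have hmems : ⁅Btil + B, v⁆ ∈ 𝔰.toSubmodule := by
      rw [← hbx]; exact 𝔰.lie_mem hBtilB hx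
    refine ⟨Submodule.mem_inf.mpr ⟨⟨⁅Btil + B, v⁆, hmems, (hτQ _ (hPQ hmemP)).2⟩, hmemP⟩, ?_⟩
    rw [← hbx]
    exact hmemM _ hBtilB _ hx
  have hLinj : ∀ v ∈ N₀, ⁅Btil + B, v⁆ = 0 → v = 0 := by
    intro v hv h0
    obtain ⟨hv1, hv2⟩ := Submodule.mem_inf.mp hv
    obtain ⟨V, hV, Z, hZ, hVZ⟩ := Submodule.mem_sup.mp hv2
    have e0 : ⁅Btil + B, v⁆ = ⁅Btil, V⁆ + V + (⁅Btil, Z⁆ + (2 : ℝ) • Z) := by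
      rw [← hVZ, add_lie, lie_add, lie_add, hBv V hV, hBz Z hZ]
      abel
    have hexp : (0 : g) + (0 : ℝ) • B + (⁅Btil, V⁆ + V) + (⁅Btil, Z⁆ + (2 : ℝ) • Z) = 0 := by
      simp only [zero_smul, add_zero, zero_add]
      rw [← e0, h0]
    obtain ⟨-, -, hX, hY⟩ := hindep 0 𝔨.zero_mem 0 _
      (𝔳.add_mem (hkv Btil hBtilk V hV) hV)
      _ (𝔷.add_mem (hkz Btil hBtilk Z hZ) (Submodule.smul_mem _ _ hZ)) hexp
    have hskV : ip ⁅Btil, V⁆ V = 0 := by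
      have h1 := hskew Btil hBtilk V (h𝔳P hV) V (h𝔳P hV)
      have h2 := hip_symm V ⁅Btil, V⁆
      linarith
    have hskZ : ip ⁅Btil, Z⁆ Z = 0 := by
      have h1 := hskew Btil hBtilk Z (h𝔷P hZ) Z (h𝔷P hZ)
      have h2 := hip_symm Z ⁅Btil, Z⁆
      linarith
    have hV0 : V = 0 := by
      by_contra hne
      have hpos := hip_pos V (hPQ (h𝔳P hV)) hne
      have h3 : ip (⁅Btil, V⁆ + V) V = 0 := by rw [hX]; simp
      rw [map_add, LinearMap.add_apply, hskV, zero_add] at h3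
      linarith
    have hZ0 : Z = 0 := by
      by_contra hne
      have hpos := hip_pos Z (hPQ (h𝔷P hZ)) hne
      have h3 : ip (⁅Btil, Z⁆ + (2 : ℝ) • Z) Z = 0 := by rw [hY]; simp
      rw [map_add, LinearMap.add_apply, hskZ, zero_add, map_smul,
        LinearMap.smul_apply, smul_eq_mul] at h3
      linarith
    rw [← hVZ, hV0, hZ0, add_zero]
  -- the restricted endomorphism of N₀
  have hmap : ∀ v ∈ N₀, (LieAlgebra.ad ℝ g (Btil + B)) v ∈ N₀ := by
    intro v hv
    rw [LieAlgebra.ad_apply]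
    exact (hL v hv).1
  set f : N₀ →ₗ[ℝ] N₀ := (LieAlgebra.ad ℝ g (Btil + B)).restrict hmap with hfdef
  have hker : LinearMap.ker f = ⊥ := by
    rw [LinearMap.ker_eq_bot']
    rintro ⟨v, hv⟩ h
    have h' : ⁅Btil + B, v⁆ = 0 := by
      have := congrArg Subtype.val h
      simpa [hfdef, LinearMap.restrict_apply, LieAlgebra.ad_apply] using this
    exact Subtype.ext (hLinj v hv h')
  have hsurj : Function.Surjective f :=
    LinearMap.injective_iff_surjective.mp (LinearMap.ker_eq_bot.mp hker)
  have hN₀le : N₀ ≤ 𝔰' := by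
    intro u hu
    obtain ⟨⟨v, hv⟩, hfv⟩ := hsurj ⟨u, hu⟩
    have h' : ⁅Btil + B, v⁆ = u := by
      have := congrArg Subtype.val hfv
      simpa [hfdef, LinearMap.restrict_apply, LieAlgebra.ad_apply] using this
    rw [← h']
    exact (hL v hv).2
  -- assemble the five claims
  refine ⟨h𝔰'_le_s, ?_, ?_, ?_, ?_⟩
  · intro x hx y hy
    exact hmemM x (h𝔰'_le_s hx) y (h𝔰'_le_s hy)
  · intro x hx y hy
    exact hmemM x hx y (h𝔰'_le_s hy)
  · -- 𝔱 ⊔ 𝔰' = 𝔰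
    apply le_antisymm
    · refine sup_le ?_ h𝔰'_le_s
      rw [h𝔱]; exact inf_le_right
    · intro x hx
      obtain ⟨t, V, hV, Z, hZ, hτxe⟩ := hQdec (τ x) (hτ x)
      have hVZP : V + Z ∈ P := add_mem (h𝔳P hV) (h𝔷P hZ)
      have hx' : x - t • (Btil + B) ∈ 𝔰.toSubmodule :=
        sub_mem hx (Submodule.smul_mem _ _ hBtilB)
      have hτ' : τ (x - t • (Btil + B)) = V + Z := by
        rw [map_sub, map_smul, hτBtB, hτxe]; abel
      have hVZN : V + Z ∈ N₀ := Submodule.mem_inf.mpr ⟨⟨_, hx', hτ'⟩, hVZP⟩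
      have hVZ𝔰' : V + Z ∈ 𝔰' := hN₀le hVZN
      have hy𝔰 : x - t • (Btil + B) - (V + Z) ∈ 𝔰.toSubmodule :=
        sub_mem hx' (h𝔰'_le_s hVZ𝔰')
      have hτy : τ (x - t • (Btil + B) - (V + Z)) = 0 := by
        rw [map_sub, hτ', (hτQ _ (hPQ hVZP)).2, sub_self]
      have hyk : x - t • (Btil + B) - (V + Z) ∈ 𝔨.toSubmodule := by
        have h4 := hπτ (x - t • (Btil + B) - (V + Z))
        rw [hτy, add_zero] at h4
        rw [← h4]; exact hπ _
      refine Submodule.mem_sup.mpr ⟨x - t • (Btil + B) - (V + Z), ?_,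
        t • (Btil + B) + (V + Z),
        add_mem (Submodule.smul_mem _ _ hBtB_s') hVZ𝔰', by abel⟩
      rw [h𝔱]
      exact Submodule.mem_inf.mpr ⟨hyk, hy𝔰⟩
  · -- 𝔱 ⊓ 𝔰' = ⊥
    rw [eq_bot_iff]
    intro w hw
    obtain ⟨hw𝔱, hw𝔰'⟩ := Submodule.mem_inf.mp hw
    rw [h𝔱] at hw𝔱
    obtain ⟨hwk, hws⟩ := Submodule.mem_inf.mp hw𝔱
    rw [h𝔰'] at hw𝔰'
    obtain ⟨a, ha, m, hm, hwm⟩ := Submodule.mem_sup.mp hw𝔰'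
    obtain ⟨c, rfl⟩ := Submodule.mem_span_singleton.mp ha
    have hmP : m ∈ P := hM_le_P hm
    obtain ⟨V, hV, Z, hZ, hVZ⟩ := Submodule.mem_sup.mp hmP
    have hτw : τ w = 0 := (hτk w hwk).2
    have h1 : c • B + m = 0 := by
      rw [← hwm, map_add, map_smul, hτBtB, (hτQ m (hPQ hmP)).2] at hτw
      exact hτw
    have hcomp : (0 : g) + c • B + V + Z = 0 := by
      rw [zero_add, add_assoc, hVZ, h1]
    obtain ⟨-, hc, hV0, hZ0⟩ := hindep 0 𝔨.zero_mem c V hV Z hZ hcomp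
    rw [Submodule.mem_bot, ← hwm, ← hVZ, hc, hV0, hZ0]
    simp
end

section
/- Let ℍ be the real quaternions with the inner product ⟨p,q⟩ = Re(p · conj(q)), and let Im ℍ denote the 3-dimensional subspace of purely imaginary quaternions. Then for every 2-dimensional real linear subspace V of ℍ there exists a purely imaginary quaternion p with |p| = 1 such that V·p = V, and moreover for every purely imaginary quaternion q with |q| = 1 and q orthogonal to p, the subspace V·q = { v·q : v ∈ V } is orthogonal to V. -/
open Quaternion
open scoped RealInnerProductSpace

/-!
Take an orthonormal basis `a, b` of `V` and put `p = star a * b`, a unit quaternion with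
`a * p = b`; it is imaginary because `p.re = ⟪a, b⟫`. As `p * p = -1`, right multiplication
by `p` maps `V = span {a, a * p}` onto itself. For imaginary `q` the form `(v, w) ↦ ⟪v * q, w⟫`
is alternating, so on `V` it is determined by `⟪a * q, b⟫ = ⟪a * q, a * p⟫ = ⟪q, p⟫`.
-/

theorem Submodule.exists_orthonormal_pair_of_finrank_eq_two {𝕜 E : Type*} [RCLike 𝕜]
    [NormedAddCommGroup E] [InnerProductSpace 𝕜 E] (V : Submodule 𝕜 E)
    (hV : Module.finrank 𝕜 V = 2) :
    ∃ a b : E, Orthonormal 𝕜 ![a, b] ∧ V = span 𝕜 {a, b} := by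
  have : FiniteDimensional 𝕜 V := .of_finrank_pos (by omega)
  let B := (stdOrthonormalBasis 𝕜 V).reindex (finCongr hV)
  have hB : ![(B 0 : E), B 1] = V.subtype ∘ B := by
    ext i; fin_cases i <;> rfl
  refine ⟨B 0, B 1, hB ▸ B.orthonormal.comp_linearIsometry V.subtypeₗᵢ, ?_⟩
  rw [← Matrix.range_cons_cons_empty _ _ ![], hB, Set.range_comp, span_image,
    ← B.coe_toBasis, B.toBasis.span_eq, map_subtype_top]

theorem Submodule.map_mulRight_span_pair_mul_eq {R A : Type*} [CommRing R] [Ring A]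
    [Algebra R A] {p : A} (hp : p * p = -1) (a : A) :
    (span R {a, a * p}).map (LinearMap.mulRight R p) = span R {a, a * p} := by
  rw [map_span, Set.image_pair, LinearMap.mulRight_apply, LinearMap.mulRight_apply,
    mul_assoc, hp, mul_neg_one, Set.pair_comm, span_insert, span_insert, ← Set.neg_singleton,
    span_neg]

namespace Quaternion

theorem re_mul_comm {R : Type*} [CommRing R] (a b : ℍ[R]) : (a * b).re = (b * a).re := by
  simp only [re_mul]; ring

theorem mul_self_eq_neg_one {p : ℍ} (hp : p.re = 0) (hp₁ : ‖p‖ = 1) : p * p = -1 := by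
  rw [← sq, sq_eq_neg_normSq.mpr hp, normSq_eq_norm_mul_self, hp₁, mul_one, coe_one]

theorem inner_one_right (q : ℍ) : ⟪q, 1⟫ = q.re := by
  rw [inner_def, star_one, mul_one]

theorem inner_mul_mul_left (a x y : ℍ) : ⟪a * x, a * y⟫ = normSq a * ⟪x, y⟫ := by
  rw [inner_def, inner_def, star_mul, mul_assoc, re_mul_comm, mul_assoc, mul_assoc,
    star_mul_self, ← mul_assoc, mul_coe_eq_smul, re_smul, smul_eq_mul]

theorem inner_mul_self_eq_zero_of_re_eq_zero {q : ℍ} (hq : q.re = 0) (v : ℍ) :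
    ⟪v * q, v⟫ = 0 := by
  simpa [inner_one_right, hq] using inner_mul_mul_left v q 1

theorem inner_mul_swap_of_re_eq_zero {q : ℍ} (hq : q.re = 0) (v w : ℍ) :
    ⟪w * q, v⟫ = -⟪v * q, w⟫ := by
  rw [inner_def, inner_def, ← re_star, star_mul, star_mul, star_star, star_eq_neg.mpr hq]
  simp [mul_assoc]

theorem inner_mul_eq_zero_of_mem_span_pair {q a b : ℍ} (hq : q.re = 0) (hab : ⟪a * q, b⟫ = 0)
    {v w : ℍ} (hv : v ∈ Submodule.span ℝ {a, b}) (hw : w ∈ Submodule.span ℝ {a, b}) :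
    ⟪v * q, w⟫ = 0 := by
  have hortho : (Submodule.span ℝ {a, b}).map (LinearMap.mulRight ℝ q) ⟂
      Submodule.span ℝ {a, b} := by
    rw [Submodule.map_span, Submodule.isOrtho_span]
    rintro _ ⟨x, hx, rfl⟩ y hy
    rcases hx with rfl | rfl <;> rcases hy with rfl | rfl
    · exact inner_mul_self_eq_zero_of_re_eq_zero hq _
    · exact hab
    · rw [LinearMap.mulRight_apply, inner_mul_swap_of_re_eq_zero hq, hab, neg_zero]
    · exact inner_mul_self_eq_zero_of_re_eq_zero hq _
  exact Submodule.isOrtho_iff_inner_eq.mp hortho _ (Submodule.mem_map_of_mem hv) w hw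

end Quaternion

/-- Every 2-dimensional real linear subspace `V` of the quaternions is totally complex:
there is a purely imaginary unit quaternion `p` with `V·p = V`, and for every purely
imaginary unit quaternion `q` orthogonal to `p` the subspace `V·q` is orthogonal
to `V`. -/
theorem two_dim_subspace_totally_complex
    (V : Submodule ℝ (Quaternion ℝ)) (hV : Module.finrank ℝ V = 2) :
    ∃ p : Quaternion ℝ, p.re = 0 ∧ ‖p‖ = 1 ∧
      Submodule.map (LinearMap.mulRight ℝ p) V = V ∧
      ∀ q : Quaternion ℝ, q.re = 0 → ‖q‖ = 1 → ⟪p, q⟫ = 0 →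
        ∀ v ∈ V, ∀ w ∈ V, ⟪v * q, w⟫ = 0 := by
  obtain ⟨a, b, hab, rfl⟩ := V.exists_orthonormal_pair_of_finrank_eq_two hV
  have ha₁ : ‖a‖ = 1 := by simpa using hab.1 0
  have hb₁ : ‖b‖ = 1 := by simpa using hab.1 1
  have ha : normSq a = 1 := by rw [normSq_eq_norm_mul_self, ha₁, mul_one]
  set p := star a * b
  have hap : a * p = b := by rw [← mul_assoc, self_mul_star, ha, coe_one, one_mul]
  have hp_re : p.re = 0 :=
    calc p.re = ⟪a * 1, a * p⟫ := by
          rw [inner_mul_mul_left, ha, one_mul, real_inner_comm, inner_one_right]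
      _ = 0 := by simpa [hap] using hab.2 zero_ne_one
  have hp_norm : ‖p‖ = 1 := by rw [norm_mul, Quaternion.norm_star, ha₁, hb₁, one_mul]
  refine ⟨p, hp_re, hp_norm, ?_, fun q hq _ hpq v hv w hw => ?_⟩
  · rw [← hap]
    exact Submodule.map_mulRight_span_pair_mul_eq (mul_self_eq_neg_one hp_re hp_norm) a
  · refine inner_mul_eq_zero_of_mem_span_pair hq ?_ hv hw
    rw [← hap, inner_mul_mul_left, ha, one_mul, real_inner_comm, hpq]
end

section
/- Let E be a finite-dimensional complex inner product space, regarded also as a real inner product space via the real part of its Hermitian inner product, and let J : E → E denote multiplication by i. Let V ⊆ E be a 2-dimensional real linear subspace with orthogonal projection P_V : E → V. Then the quantity ‖P_V(J v)‖ is the same for all unit vectors v ∈ V; equivalently, there exists φ ∈ [0,π/2] such that ‖P_V(J v)‖ = cos(φ)·‖v‖ for every v ∈ V. -/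
/-! The compression `T = P_V ∘ J` of `J` to `V` is skew-symmetric, because `⟪J v, v⟫ = 0`.
A skew-symmetric operator on a Euclidean plane is a multiple of the rotation by `π/2`: in an
orthonormal basis `(e₀, e₁)` its matrix is `[[0, -α], [α, 0]]` with `α = ⟪T e₀, e₁⟫`, so
`‖T v‖ = |α| ‖v‖`, and `|α| ≤ 1` since neither `P_V` nor `J` increases norms. -/

open scoped RealInnerProductSpace

section

variable {F : Type*} [NormedAddCommGroup F] [InnerProductSpace ℝ F]

theorem real_inner_map_left_eq_neg_of_inner_map_self_eq_zero {T : F →ₗ[ℝ] F}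
    (hT : ∀ x, ⟪T x, x⟫ = 0) (x y : F) : ⟪T x, y⟫ = -⟪x, T y⟫ := by
  have h := hT (x + y)
  rw [map_add, inner_add_left, inner_add_right, inner_add_right, hT x, hT y,
    real_inner_comm x] at h
  linarith

theorem OrthonormalBasis.norm_sq_map_of_inner_map_self_eq_zero (b : OrthonormalBasis (Fin 2) ℝ F)
    {T : F →ₗ[ℝ] F} (hT : ∀ x, ⟪T x, x⟫ = 0) (x : F) :
    ‖T x‖ ^ 2 = ⟪T (b 0), b 1⟫ ^ 2 * ‖x‖ ^ 2 := by
  have hskew := real_inner_map_left_eq_neg_of_inner_map_self_eq_zero hT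
  have expand (y : F) : ⟪x, y⟫ = ⟪x, b 0⟫ * ⟪b 0, y⟫ + ⟪x, b 1⟫ * ⟪b 1, y⟫ := by
    rw [← b.sum_inner_mul_inner x y, Fin.sum_univ_two]
  have h0 : ⟪T x, b 0⟫ = -(⟪x, b 1⟫ * ⟪T (b 0), b 1⟫) := by
    rw [hskew, expand, real_inner_comm (T (b 0)) (b 0), hT, real_inner_comm (T (b 0)) (b 1)]
    ring
  have h1 : ⟪T x, b 1⟫ = ⟪x, b 0⟫ * ⟪T (b 0), b 1⟫ := by
    rw [hskew, expand, real_inner_comm (T (b 1)) (b 1), hT, real_inner_comm (T (b 1)) (b 0),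
      hskew, real_inner_comm (T (b 0)) (b 1)]
    ring
  rw [← b.sum_sq_inner_left (T x), ← b.sum_sq_inner_left x, Fin.sum_univ_two, Fin.sum_univ_two,
    h0, h1]
  ring

theorem OrthonormalBasis.norm_map_of_inner_map_self_eq_zero (b : OrthonormalBasis (Fin 2) ℝ F)
    {T : F →ₗ[ℝ] F} (hT : ∀ x, ⟪T x, x⟫ = 0) (x : F) :
    ‖T x‖ = |⟪T (b 0), b 1⟫| * ‖x‖ := by
  rw [← sq_eq_sq₀ (norm_nonneg _) (by positivity), mul_pow, sq_abs,
    b.norm_sq_map_of_inner_map_self_eq_zero hT]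

end

/-- Every 2-dimensional real linear subspace `V` of a finite-dimensional complex inner
product space has constant Kähler angle: there is `φ ∈ [0, π/2]` with
`‖P_V (i • v)‖ = cos φ * ‖v‖` for every `v ∈ V`. -/
theorem two_dim_real_subspace_constant_kahler_angle
    (E : Type*) [NormedAddCommGroup E] [InnerProductSpace ℂ E] [FiniteDimensional ℂ E] :
    letI : InnerProductSpace ℝ E := InnerProductSpace.complexToReal
    ∀ V : Submodule ℝ E, Module.finrank ℝ V = 2 →
      ∃ φ ∈ Set.Icc (0 : ℝ) (Real.pi / 2), ∀ v ∈ V,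
        ‖(Submodule.orthogonalProjectionOnto V ((Complex.I : ℂ) • v) : E)‖ = Real.cos φ * ‖v‖ := by
  let : InnerProductSpace ℝ E := InnerProductSpace.complexToReal
  intro V hV
  let T : V →ₗ[ℝ] V := V.orthogonalProjectionOnto.toLinearMap ∘ₗ
    DistribSMul.toLinearMap ℝ E Complex.I ∘ₗ V.subtype
  have hT (x : V) : ⟪T x, x⟫ = 0 := by
    simpa [T, real_inner_comm] using real_inner_I_smul_self ℂ (x : E)
  let b : OrthonormalBasis (Fin 2) ℝ V := (stdOrthonormalBasis ℝ V).reindex (finCongr hV)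
  have hc : |⟪T (b 0), b 1⟫| ≤ 1 := calc
    |⟪T (b 0), b 1⟫| = ‖T (b 0)‖ := by
      rw [b.norm_map_of_inner_map_self_eq_zero hT, b.norm_eq_one, mul_one]
    _ ≤ ‖(Complex.I : ℂ) • (b 0 : E)‖ := V.norm_orthogonalProjectionOnto_apply_le _
    _ = 1 := by rw [norm_smul, Complex.norm_I, one_mul]; exact b.norm_eq_one 0
  refine ⟨Real.arccos |⟪T (b 0), b 1⟫|, ⟨Real.arccos_nonneg _,
    Real.arccos_le_pi_div_two.mpr (abs_nonneg _)⟩, fun v hv => ?_⟩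
  rw [Real.cos_arccos (by linarith [abs_nonneg ⟪T (b 0), b 1⟫]) hc]
  exact b.norm_map_of_inner_map_self_eq_zero hT ⟨v, hv⟩
end

section
/- Let E be a finite-dimensional complex inner product space, regarded also as a real inner product space via the real part of its Hermitian inner product, and let J : E → E denote multiplication by i. If V ⊆ E is a nonzero real-linear subspace with orthogonal projection P_V which has constant Kähler angle φ for some φ ∈ [0, π/2) (i.e. ‖P_V(J v)‖ = cos(φ)·‖v‖ for every v ∈ V, with cos(φ) > 0), then the real dimension of V is even. -/
/-!
Write `J` for multiplication by `i`, viewed as a real-linear map, and `T = P_V ∘ J` restricted to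
`V`. Since `J` is skew for the real inner product `Re ⟪·, ·⟫` and `P_V` is symmetric, `T` is a
skew-symmetric endomorphism of `V`; the Kähler angle condition says `‖T v‖ = cos φ ‖v‖` with
`cos φ > 0`, so `T` is injective. A skew-symmetric operator on a real space of odd dimension
satisfies `det T = det Tᵀ = det (-T) = -det T`, hence is singular, so `dim V` is even.
-/

open Module RCLike
open scoped InnerProductSpace RealInnerProductSpace

namespace LinearMap

section SkewSymmetric

variable {𝕜 E : Type*} [RCLike 𝕜] [NormedAddCommGroup E] [InnerProductSpace 𝕜 E]

def IsSkewSymmetric (T : E →ₗ[𝕜] E) : Prop :=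
  ∀ x y, ⟪T x, y⟫_𝕜 = -⟪x, T y⟫_𝕜

theorem IsSkewSymmetric.adjoint_eq [FiniteDimensional 𝕜 E] {T : E →ₗ[𝕜] E}
    (hT : T.IsSkewSymmetric) : T.adjoint = -T := by
  refine ((eq_adjoint_iff (-T) T).2 fun x y => ?_).symm
  rw [neg_apply, inner_neg_left, hT, neg_neg]

theorem IsSkewSymmetric.compress {T : E →ₗ[𝕜] E} (hT : T.IsSkewSymmetric)
    (K : Submodule 𝕜 E) [K.HasOrthogonalProjection] :
    (K.orthogonalProjectionOnto.toLinearMap ∘ₗ T ∘ₗ K.subtype).IsSkewSymmetric := fun x y => by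
  simp only [coe_comp, Function.comp_apply, Submodule.coe_subtype, ContinuousLinearMap.coe_coe,
    Submodule.inner_orthogonalProjectionOnto_eq_of_mem_right,
    Submodule.inner_orthogonalProjectionOnto_eq_of_mem_left, hT x y]

end SkewSymmetric

section RealSkewSymmetric

variable {F : Type*} [NormedAddCommGroup F] [InnerProductSpace ℝ F] [FiniteDimensional ℝ F]

theorem IsSkewSymmetric.det_eq_zero_of_odd {T : F →ₗ[ℝ] F} (hT : T.IsSkewSymmetric)
    (hodd : Odd (finrank ℝ F)) : T.det = 0 := by
  let b := (stdOrthonormalBasis ℝ F).toBasis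
  have hdet_adjoint : T.adjoint.det = T.det := by
    rw [← det_toMatrix b, ← det_toMatrix b, toMatrix_adjoint, Matrix.det_conjTranspose, star_trivial]
  have hdet_neg : (-T).det = -T.det := by
    rw [← neg_one_smul ℝ T, det_smul, hodd.neg_one_pow, neg_one_mul]
  rw [hT.adjoint_eq, hdet_neg] at hdet_adjoint
  linarith

theorem IsSkewSymmetric.even_finrank_of_injective {T : F →ₗ[ℝ] F} (hT : T.IsSkewSymmetric)
    (hinj : Function.Injective T) : Even (finrank ℝ F) := by
  by_contra hodd
  have hker := bot_lt_ker_of_det_eq_zero (hT.det_eq_zero_of_odd (Nat.not_even_iff_odd.1 hodd))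
  exact hker.ne (ker_eq_bot.2 hinj).symm

end RealSkewSymmetric

theorem injective_of_norm_map_eq_mul {R E F : Type*} [Ring R] [NormedAddCommGroup E]
    [NormedAddCommGroup F] [Module R E] [Module R F] {T : E →ₗ[R] F} {c : ℝ}
    (hT : ∀ v, ‖T v‖ = c * ‖v‖) (hc : c ≠ 0) : Function.Injective T := by
  refine (injective_iff_map_eq_zero T).2 fun v hv => norm_eq_zero.1 ?_
  have := hT v
  rw [hv, norm_zero, eq_comm, mul_eq_zero] at this
  exact this.resolve_left hc

end LinearMap

theorem re_inner_I_smul_left {𝕜 E : Type*} [RCLike 𝕜] [SeminormedAddCommGroup E]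
    [InnerProductSpace 𝕜 E] (x y : E) : re ⟪(I : 𝕜) • x, y⟫_𝕜 = -re ⟪x, (I : 𝕜) • y⟫_𝕜 := by
  rw [inner_smul_left, inner_smul_right, conj_I, neg_mul, map_neg]

/-- A nonzero real-linear subspace of a finite-dimensional complex inner product space
with constant Kähler angle `φ ∈ [0, π/2)` (so `cos φ > 0`) has even real dimension. -/
theorem even_finrank_of_constant_kahler_angle_lt
    (E : Type*) [NormedAddCommGroup E] [InnerProductSpace ℂ E] [FiniteDimensional ℂ E] :
    letI : InnerProductSpace ℝ E := InnerProductSpace.complexToReal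
    ∀ (V : Submodule ℝ E) (φ : ℝ), V ≠ ⊥ → φ ∈ Set.Ico 0 (Real.pi / 2) →
      (∀ v ∈ V, ‖(V.orthogonalProjectionOnto ((Complex.I : ℂ) • v) : E)‖ = Real.cos φ * ‖v‖) →
      Even (Module.finrank ℝ V) := by
  let _ : InnerProductSpace ℝ E := InnerProductSpace.complexToReal
  intro V φ _ hφ hangle
  have hcos : 0 < Real.cos φ :=
    Real.cos_pos_of_mem_Ioo ⟨by linarith [hφ.1, Real.pi_pos], hφ.2⟩
  let J : E →ₗ[ℝ] E := (LinearMap.lsmul ℂ E Complex.I).restrictScalars ℝ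
  have hJ : J.IsSkewSymmetric := fun x y => re_inner_I_smul_left x y
  exact (hJ.compress V).even_finrank_of_injective
    (LinearMap.injective_of_norm_map_eq_mul (fun v => hangle v v.2) hcos.ne')
end
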